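/- arXiv:1607.07132 — 8 statements merged into one kernel-verified Lean document; each statement's English description precedes it below -/
import Mathlib

section
/- If G is a graph whose degeneracy is k (i.e., G is k-degenerate but not (k-1)-degenerate), then the 2-ranking number of G satisfies χ₂(G) ≥ k + 1. -/
/-- `f` is a 2-ranking of `G`: every path of length 1 or 2 is well-ranked, i.e. the
endpoints of each edge get distinct ranks, and whenever `u, w, v` is a path of length 2
whose endpoints `u, v` get equal ranks, the interior vertex `w` gets a higher rank. -/
def IsTwoRanking {V : Type*} (G : SimpleGraph V) (f : V → ℕ) : Prop :=
  (∀ u v, G.Adj u v → f u ≠ f v) ∧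
  ∀ u v w, G.Adj u w → G.Adj w v → u ≠ v → f u = f v → f u < f w

/-- The 2-ranking number `χ₂(G)`: the least `n` such that `G` has a 2-ranking using
`n` ranks (ranks taken from `{0, …, n-1}`). -/
noncomputable def twoRankingNumber {V : Type*} (G : SimpleGraph V) : ℕ :=
  sInf {n | ∃ f : V → ℕ, IsTwoRanking G f ∧ ∀ v, f v < n}

/-- `G` is `k`-degenerate: every nonempty (finite) subgraph of `G` has a vertex of
degree at most `k`; equivalently, every nonempty finite set `s` of vertices contains a
vertex with at most `k` neighbors inside `s`. -/
def Degenerate {V : Type*} (G : SimpleGraph V) (k : ℕ) : Prop :=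
  ∀ s : Finset V, s.Nonempty → ∃ v ∈ s, {u : V | u ∈ s ∧ G.Adj v u}.ncard ≤ k

/-!
Let `s` witness that `G` is not `(k-1)`-degenerate, so every vertex of `s` has at least `k`
neighbours in `s`, and let `v` be a vertex of `s` of least rank. Two neighbours of `v` with
equal rank would need `v` to outrank them, so the neighbours of `v` in `s` together with `v`
itself carry `k + 1` pairwise distinct ranks.
-/

namespace IsTwoRanking

variable {V : Type*} {G : SimpleGraph V} {f : V → ℕ}

theorem of_injective (hf : Function.Injective f) : IsTwoRanking G f :=
  ⟨fun _ _ huv h => G.ne_of_adj huv (hf h), fun _ _ _ _ _ huv h => absurd (hf h) huv⟩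

theorem injOn_insert_of_forall_adj_le (hf : IsTwoRanking G f) {v : V} {t : Set V}
    (ht : ∀ u ∈ t, G.Adj v u ∧ f v ≤ f u) : Set.InjOn f (insert v t) := by
  have hne : ∀ u ∈ t, f v ≠ f u := fun u hu => hf.1 v u (ht u hu).1
  rintro a (rfl | ha) b (rfl | hb) hab
  · rfl
  · exact absurd hab (hne b hb)
  · exact absurd hab.symm (hne a ha)
  · by_contra hab'
    exact (ht a ha).2.not_gt (hf.2 a b v (ht a ha).1.symm (ht b hb).1 hab' hab)

theorem card_lt_of_forall_adj_le (hf : IsTwoRanking G f) {n : ℕ} (hn : ∀ v, f v < n)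
    {v : V} {t : Finset V} (ht : ∀ u ∈ t, G.Adj v u ∧ f v ≤ f u) : t.card < n := by
  classical
  have hv : v ∉ t := fun h => (ht v h).1.ne rfl
  have := Finset.card_le_card_of_injOn f (s := insert v t) (t := Finset.range n)
    (fun a _ => Finset.mem_range.2 (hn a))
    (by simpa using hf.injOn_insert_of_forall_adj_le (t := ↑t) ht)
  rw [Finset.card_insert_of_notMem hv, Finset.card_range] at this
  omega

end IsTwoRanking

theorem le_twoRankingNumber {V : Type*} [Fintype V] (G : SimpleGraph V) {m : ℕ}
    (h : ∀ f n, IsTwoRanking G f → (∀ v, f v < n) → m ≤ n) : m ≤ twoRankingNumber G :=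
  le_csInf ⟨Fintype.card V, fun v => Fintype.equivFin V v,
      IsTwoRanking.of_injective fun _ _ h => (Fintype.equivFin V).injective (Fin.ext h),
      fun v => (Fintype.equivFin V v).isLt⟩
    fun _ ⟨f, hf, hn⟩ => h f _ hf hn

theorem twoRankingNumber_ge_of_degeneracy_general {V : Type*} [Fintype V] (G : SimpleGraph V)
    (k : ℕ) (hndeg : ¬ Degenerate G (k - 1)) :
    k + 1 ≤ twoRankingNumber G := by
  classical
  obtain ⟨s, hs, hdense⟩ : ∃ s : Finset V, s.Nonempty ∧
      ∀ v ∈ s, k - 1 < {u | u ∈ s ∧ G.Adj v u}.ncard := by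
    simpa [Degenerate] using hndeg
  refine le_twoRankingNumber G fun f n hf hn => ?_
  obtain ⟨v, hv, hmin⟩ := s.exists_min_image f hs
  have hk : k ≤ (s.filter (G.Adj v)).card := by
    have := hdense v hv
    rw [show {u | u ∈ s ∧ G.Adj v u} = ↑(s.filter (G.Adj v)) by ext; simp,
      Set.ncard_coe_finset] at this
    omega
  have hlt := hf.card_lt_of_forall_adj_le hn (t := s.filter (G.Adj v)) fun u hu => by
    rw [Finset.mem_filter] at hu
    exact ⟨hu.2, hmin u hu.1⟩
  omega

/-- If `G` has degeneracy exactly `k` (it is `k`-degenerate but not `(k-1)`-degenerate),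
then `χ₂(G) ≥ k + 1`. -/
theorem twoRankingNumber_ge_of_degeneracy {V : Type*} [Fintype V] (G : SimpleGraph V)
    (k : ℕ) (hdeg : Degenerate G k) (hndeg : ¬ Degenerate G (k - 1)) :
    k + 1 ≤ twoRankingNumber G :=
  twoRankingNumber_ge_of_degeneracy_general G k hndeg
end

section
/- For every nonnegative integer d, the 2-ranking number of the d-dimensional hypercube Q_d equals d + 1. -/
/-- The `d`-dimensional hypercube `Q_d`: vertices are the elements of `{0,1}^d`, and two
vertices are adjacent iff they differ in exactly one coordinate. -/
def cubeGraph (d : ℕ) : SimpleGraph (Fin d → Bool) where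
  Adj u v := (Finset.univ.filter fun i => u i ≠ v i).card = 1
  symm := by
    constructor
    intro u v h
    simpa [ne_comm] using h
  loopless := by
    constructor
    intro u h
    simp at h

/-!
Lower bound: at a vertex `v` of minimum rank, two distinct neighbours of equal rank would have to
rank below `v`, so the `d` neighbours of `v` get pairwise distinct ranks, all above that of `v`.

Upper bound: label each coordinate by a number whose leading bit is a bit of `d`, distinct
coordinates getting distinct labels (there are exactly `d` such numbers), and send a vertex to the
xor of the labels of its `1`-coordinates, so that neighbours differ by xor with a label. A number
`x` is ranked by the highest bit `ℓ` it shares with `d`: rank `0` if there is none, otherwise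
`d % 2 ^ ℓ + 1 + x % 2 ^ ℓ ∈ (d % 2 ^ ℓ, d % 2 ^ (ℓ + 1)] ⊆ [1, d]`. Equal ranks force equal
`d`-bits, which separates neighbours. If two neighbours `s ^^^ a`, `s ^^^ b` of `s` have equal
ranks, then `a ^^^ b` has no `d`-bits, so `a` and `b` share their leading bit `m`; as
`a ^^^ b < 2 ^ m` while its leading bit lies above the level of `s ^^^ a`, the number `s ^^^ a`
lacks bit `m`, so `s` has it and sits at a higher level.
-/

namespace Nat

theorem testBit_eq_false_of_log2_lt {x i : ℕ} (h : x.log2 < i) : x.testBit i = false :=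
  testBit_lt_two_pow (lt_of_lt_of_le lt_log2_self (Nat.pow_le_pow_right two_pos h))

theorem mod_two_pow_succ_eq (x i : ℕ) :
    x % 2 ^ (i + 1) = x % 2 ^ i + 2 ^ i * (x.testBit i).toNat := by
  rw [mod_pow_succ, toNat_testBit]

theorem mod_two_pow_le_mod_two_pow (x : ℕ) {i j : ℕ} (h : i ≤ j) :
    x % 2 ^ i ≤ x % 2 ^ j := by
  rw [← mod_mod_of_dvd x (Nat.pow_dvd_pow 2 h)]
  exact mod_le _ _

theorem xor_xor_xor_cancel_left (s a b : ℕ) : (s ^^^ a) ^^^ (s ^^^ b) = a ^^^ b := by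
  rw [Nat.xor_comm s a, Nat.xor_assoc, xor_cancel_left]

theorem log2_xor_lt {a b : ℕ} (ha : a ≠ 0) (hb : b ≠ 0) (hab : a ≠ b)
    (hlog : a.log2 = b.log2) : (a ^^^ b).log2 < a.log2 := by
  refine (log2_lt (xor_ne_zero_iff.2 hab)).2 (lt_pow_two_of_testBit _ ?_)
  intro i hi
  rcases hi.lt_or_eq with hi | rfl
  · simp [testBit_eq_false_of_log2_lt hi, testBit_eq_false_of_log2_lt (hlog ▸ hi)]
  · rw [testBit_xor, testBit_log2 ha, hlog, testBit_log2 hb]; rfl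

end Nat

theorem Finset.fold_xor_update {ι : Type*} [DecidableEq ι] {s : Finset ι} {i : ι} (hi : i ∈ s)
    (f : ι → ℕ) (b : ℕ) :
    s.fold (fun x y : ℕ => x ^^^ y) 0 (Function.update f i b) =
      s.fold (fun x y : ℕ => x ^^^ y) 0 f ^^^ f i ^^^ b := by
  rw [← Finset.insert_erase hi, Finset.fold_insert (Finset.notMem_erase i s),
    Finset.fold_insert (Finset.notMem_erase i s), Function.update_self,
    Finset.fold_congr (g := f) fun k hk => Function.update_of_ne (Finset.ne_of_mem_erase hk) _ _,
    Nat.xor_comm (f i), xor_cancel_right, Nat.xor_comm]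

theorem cubeGraph_adj_iff {d : ℕ} {u v : Fin d → Bool} :
    (cubeGraph d).Adj u v ↔ ∃ i, v = Function.update u i (!u i) := by
  change (Finset.univ.filter fun i => u i ≠ v i).card = 1 ↔ _
  rw [Finset.card_eq_one]
  refine exists_congr fun i => ?_
  simp only [Finset.ext_iff, Finset.mem_filter, Finset.mem_univ, true_and, Finset.mem_singleton,
    funext_iff, Function.update_apply]
  refine forall_congr' fun k => ?_
  split_ifs with hk
  · subst hk; cases u k <;> cases v k <;> simp
  · simp [hk, eq_comm]

theorem IsTwoRanking.card_lt {V : Type*} [DecidableEq V] {G : SimpleGraph V} {f : V → ℕ}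
    (hf : IsTwoRanking G f) {n : ℕ} (hn : ∀ u, f u < n) {v : V} (hv : ∀ u, f v ≤ f u)
    {s : Finset V} (hs : ∀ u ∈ s, G.Adj v u) : s.card < n := by
  have hinj : Set.InjOn f (insert v s : Finset V) := by
    intro x hx y hy hxy
    by_contra hne
    rcases Finset.mem_insert.1 hx with rfl | hxs <;> rcases Finset.mem_insert.1 hy with rfl | hys
    · exact hne rfl
    · exact hf.1 _ _ (hs y hys) hxy
    · exact hf.1 _ _ (hs x hxs) hxy.symm
    · exact (hf.2 x y v (hs x hxs).symm (hs y hys) hne hxy).not_ge (hv x)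
  calc s.card < (insert v s).card :=
        Finset.card_lt_card (Finset.ssubset_insert fun hvs => G.irrefl (hs v hvs))
    _ ≤ (Finset.range n).card :=
      Finset.card_le_card_of_injOn f (fun u _ => Finset.mem_range.2 (hn u)) hinj
    _ = n := Finset.card_range n

theorem IsTwoRanking.succ_le_of_cubeGraph {d : ℕ} {f : (Fin d → Bool) → ℕ}
    (hf : IsTwoRanking (cubeGraph d) f) {n : ℕ} (hn : ∀ v, f v < n) : d + 1 ≤ n := by
  obtain ⟨v, hv⟩ := Finite.exists_min f
  have hinj : Function.Injective fun i => Function.update v i (!v i) := by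
    intro i j h
    by_contra hij
    simpa [Function.update_of_ne hij] using congrFun h i
  have := hf.card_lt hn hv (s := Finset.univ.image fun i => Function.update v i (!v i))
    (by simp only [Finset.mem_image]; rintro _ ⟨i, -, rfl⟩; exact cubeGraph_adj_iff.2 ⟨i, rfl⟩)
  rwa [Finset.card_image_of_injective _ hinj, Finset.card_univ, Fintype.card_fin] at this

namespace CubeTwoRanking

variable {d x y i : ℕ}

def level (d x : ℕ) : ℕ := (x &&& d).log2

def rank (d x : ℕ) : ℕ :=
  if x &&& d = 0 then 0 else d % 2 ^ level d x + 1 + x % 2 ^ level d x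

theorem testBit_level (h : x &&& d ≠ 0) :
    x.testBit (level d x) = true ∧ d.testBit (level d x) = true := by
  simpa [level] using Nat.testBit_log2 h

theorem rank_eq_zero (h : x &&& d = 0) : rank d x = 0 := if_pos h

theorem mod_two_pow_level_lt_rank (h : x &&& d ≠ 0) : d % 2 ^ level d x < rank d x := by
  rw [rank, if_neg h]; omega

theorem rank_le_mod_two_pow_level_succ (h : x &&& d ≠ 0) :
    rank d x ≤ d % 2 ^ (level d x + 1) := by
  have := Nat.mod_lt x (Nat.two_pow_pos (level d x))
  rw [rank, if_neg h, Nat.mod_two_pow_succ_eq, (testBit_level h).2]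
  simp only [Bool.toNat_true]
  omega

theorem rank_le (d x : ℕ) : rank d x ≤ d := by
  by_cases h : x &&& d = 0
  · simp [rank_eq_zero h]
  · exact (rank_le_mod_two_pow_level_succ h).trans (Nat.mod_le _ _)

theorem rank_lt_rank {m : ℕ} (hx : x &&& d < 2 ^ m) (hy : 2 ^ m ≤ y &&& d) :
    rank d x < rank d y := by
  have hy0 : y &&& d ≠ 0 := (Nat.two_pow_pos m).trans_le hy |>.ne'
  have hmy : m ≤ level d y := (Nat.le_log2 hy0).2 hy
  by_cases hx0 : x &&& d = 0
  · exact rank_eq_zero hx0 ▸ (Nat.zero_le _).trans_lt (mod_two_pow_level_lt_rank hy0)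
  have hxm : level d x < m := (Nat.log2_lt hx0).2 hx
  calc rank d x ≤ d % 2 ^ (level d x + 1) := rank_le_mod_two_pow_level_succ hx0
    _ ≤ d % 2 ^ level d y := Nat.mod_two_pow_le_mod_two_pow d (by omega)
    _ < rank d y := mod_two_pow_level_lt_rank hy0

theorem level_eq_of_rank_eq (hx : x &&& d ≠ 0) (hy : y &&& d ≠ 0) (h : rank d x = rank d y) :
    level d x = level d y := by
  have key : ∀ {x y}, x &&& d ≠ 0 → y &&& d ≠ 0 → level d x < level d y →
      rank d x < rank d y :=
    fun hx hy hlt => rank_lt_rank ((Nat.log2_lt hx).1 (Nat.lt_succ_self _))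
      ((Nat.le_log2 hy).1 hlt)
  rcases lt_trichotomy (level d x) (level d y) with hlt | heq | hgt
  · exact absurd h (key hx hy hlt).ne
  · exact heq
  · exact absurd h (key hy hx hgt).ne'

theorem and_ne_zero_of_rank_eq (h : rank d x = rank d y) (hx : x &&& d ≠ 0) :
    y &&& d ≠ 0 := by
  intro hy
  have := mod_two_pow_level_lt_rank hx
  rw [h, rank_eq_zero hy] at this
  omega

theorem testBit_eq_of_rank_eq (h : rank d x = rank d y) (hx : x &&& d ≠ 0)
    (hi : i ≤ level d x) : x.testBit i = y.testBit i := by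
  have hy := and_ne_zero_of_rank_eq h hx
  have hlev := level_eq_of_rank_eq hx hy h
  rcases hi.lt_or_eq with hi | rfl
  · have hmod : x % 2 ^ level d x = y % 2 ^ level d x := by
      rw [rank, if_neg hx, rank, if_neg hy, ← hlev] at h
      omega
    simpa [hi] using congrArg (Nat.testBit · i) hmod
  · rw [(testBit_level hx).1, hlev, (testBit_level hy).1]

theorem and_eq_of_rank_eq (h : rank d x = rank d y) : x &&& d = y &&& d := by
  by_cases hx : x &&& d = 0
  · have hy : y &&& d = 0 := by
      by_contra hy
      exact and_ne_zero_of_rank_eq h.symm hy hx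
    rw [hx, hy]
  have hy := and_ne_zero_of_rank_eq h hx
  refine Nat.eq_of_testBit_eq fun i => ?_
  rcases le_or_gt i (level d x) with hi | hi
  · rw [Nat.testBit_and, Nat.testBit_and, testBit_eq_of_rank_eq h hx hi]
  · rw [Nat.testBit_eq_false_of_log2_lt hi, Nat.testBit_eq_false_of_log2_lt
      ((level_eq_of_rank_eq hx hy h) ▸ hi : level d y < i)]

theorem level_lt_log2_xor (h : rank d x = rank d y) (hx : x &&& d ≠ 0) (hxy : x ≠ y) :
    level d x < (x ^^^ y).log2 := by
  by_contra! hle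
  have := Nat.testBit_log2 (Nat.xor_ne_zero_iff.2 hxy)
  rw [Nat.testBit_xor, testBit_eq_of_rank_eq h hx hle, Bool.xor_self] at this
  exact Bool.false_ne_true this

theorem xor_and_eq_zero_of_rank_xor_eq {s a b : ℕ} (h : rank d (s ^^^ a) = rank d (s ^^^ b)) :
    (a ^^^ b) &&& d = 0 := by
  rw [← Nat.xor_xor_xor_cancel_left s, Nat.and_xor_distrib_right, and_eq_of_rank_eq h,
    Nat.xor_self]

theorem rank_xor_ne {a : ℕ} (ha : a ≠ 0) (had : d.testBit a.log2 = true) (s : ℕ) :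
    rank d (s ^^^ a) ≠ rank d s := by
  intro h
  have h0 : (a ^^^ 0) &&& d = 0 := xor_and_eq_zero_of_rank_xor_eq (s := s) (by rwa [Nat.xor_zero])
  have := congrArg (Nat.testBit · a.log2) h0
  simp [Nat.testBit_log2 ha, had] at this

theorem log2_eq_log2_of_xor_and_eq_zero {a b : ℕ} (ha : a ≠ 0) (hb : b ≠ 0)
    (had : d.testBit a.log2 = true) (hbd : d.testBit b.log2 = true)
    (h : (a ^^^ b) &&& d = 0) : a.log2 = b.log2 := by
  have key : ∀ {a b : ℕ}, b ≠ 0 → d.testBit b.log2 = true → (a ^^^ b) &&& d = 0 →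
      ¬a.log2 < b.log2 := by
    intro a b hb hbd h hlt
    have := congrArg (Nat.testBit · b.log2) h
    simp [Nat.testBit_eq_false_of_log2_lt hlt, Nat.testBit_log2 hb, hbd] at this
  exact le_antisymm (not_lt.1 (key ha had (by rwa [Nat.xor_comm]))) (not_lt.1 (key hb hbd h))

theorem rank_xor_lt_rank {s a b : ℕ} (ha : a ≠ 0) (hb : b ≠ 0)
    (had : d.testBit a.log2 = true) (hbd : d.testBit b.log2 = true) (hab : a ≠ b)
    (h : rank d (s ^^^ a) = rank d (s ^^^ b)) : rank d (s ^^^ a) < rank d s := by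
  have hlog := log2_eq_log2_of_xor_and_eq_zero ha hb had hbd (xor_and_eq_zero_of_rank_xor_eq h)
  have hu : (s ^^^ a) &&& d < 2 ^ a.log2 := by
    by_cases hu0 : (s ^^^ a) &&& d = 0
    · exact hu0 ▸ Nat.two_pow_pos _
    refine (Nat.log2_lt hu0).1 ?_
    calc level d (s ^^^ a) < ((s ^^^ a) ^^^ (s ^^^ b)).log2 :=
          level_lt_log2_xor h hu0 (by simpa using hab)
      _ = (a ^^^ b).log2 := by rw [Nat.xor_xor_xor_cancel_left]
      _ < a.log2 := Nat.log2_xor_lt ha hb hab hlog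
  have hs : 2 ^ a.log2 ≤ s &&& d := by
    have := Nat.testBit_lt_two_pow hu
    simp only [Nat.testBit_and, Nat.testBit_xor, Nat.testBit_log2 ha, had] at this
    exact Nat.ge_two_pow_of_testBit (by simpa [had] using this)
  exact rank_lt_rank hu hs

/-- Coordinates `i ∈ [d % 2 ^ j, d % 2 ^ (j + 1))`, an interval of length `2 ^ j` when bit `j` of
`d` is set and empty otherwise, get the `2 ^ j` labels with leading bit `j`. -/
def labelLevel (d i : ℕ) : ℕ := Nat.findGreatest (fun j => d % 2 ^ j ≤ i) d

def label (d i : ℕ) : ℕ := 2 ^ labelLevel d i + (i - d % 2 ^ labelLevel d i)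

theorem mod_two_pow_labelLevel_le : d % 2 ^ labelLevel d i ≤ i :=
  Nat.findGreatest_spec (P := fun j => d % 2 ^ j ≤ i) (Nat.zero_le d) (by simp [Nat.mod_one])

theorem lt_mod_two_pow_labelLevel_succ (hi : i < d) : i < d % 2 ^ (labelLevel d i + 1) := by
  have hlt : labelLevel d i < d := by
    refine (Nat.findGreatest_le (P := fun j => d % 2 ^ j ≤ i) d).lt_of_ne fun heq => ?_
    have := mod_two_pow_labelLevel_le (d := d) (i := i)
    rw [labelLevel, heq, Nat.mod_two_pow_self] at this
    omega
  exact not_le.1 <| Nat.findGreatest_is_greatest (P := fun j => d % 2 ^ j ≤ i)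
    (Nat.lt_succ_self _) hlt

theorem testBit_labelLevel (hi : i < d) : d.testBit (labelLevel d i) = true := by
  have h := lt_mod_two_pow_labelLevel_succ hi
  rw [Nat.mod_two_pow_succ_eq] at h
  have := mod_two_pow_labelLevel_le (d := d) (i := i)
  cases hb : d.testBit (labelLevel d i)
  · simp [hb] at h; omega
  · rfl

theorem label_ne_zero : label d i ≠ 0 := by
  have := Nat.two_pow_pos (labelLevel d i)
  rw [label]; omega

theorem log2_label (hi : i < d) : (label d i).log2 = labelLevel d i := by
  have h := lt_mod_two_pow_labelLevel_succ hi
  rw [Nat.mod_two_pow_succ_eq, testBit_labelLevel hi] at h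
  have := mod_two_pow_labelLevel_le (d := d) (i := i)
  rw [Nat.log2_eq_iff label_ne_zero, label, Nat.pow_succ]
  simp only [Bool.toNat_true] at h
  omega

theorem testBit_log2_label (hi : i < d) : d.testBit (label d i).log2 = true := by
  rw [log2_label hi, testBit_labelLevel hi]

theorem label_injOn : Set.InjOn (label d) (Set.Iio d) := by
  intro i hi i' hi' h
  have hlev : labelLevel d i = labelLevel d i' := by
    rw [← log2_label hi, ← log2_label hi', h]
  have := mod_two_pow_labelLevel_le (d := d) (i := i)
  have := mod_two_pow_labelLevel_le (d := d) (i := i')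
  rw [label, label, hlev] at h
  rw [hlev] at *
  omega

def code (d : ℕ) (v : Fin d → Bool) : ℕ :=
  Finset.univ.fold (fun x y : ℕ => x ^^^ y) 0 fun i => if v i then label d i else 0

theorem code_update_not (v : Fin d → Bool) (i : Fin d) :
    code d (Function.update v i (!v i)) = code d v ^^^ label d i := by
  have : (fun k => if Function.update v i (!v i) k then label d k else 0) =
      Function.update (fun k => if v k then label d k else 0) i (if !v i then label d i else 0) :=
    funext <| Function.apply_update (fun (k : Fin d) (b : Bool) => if b then label d k else 0)
      v i (!v i)
  rw [code, this, Finset.fold_xor_update (Finset.mem_univ i), ← code]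
  cases v i <;> simp

theorem isTwoRanking_rank_code (d : ℕ) :
    IsTwoRanking (cubeGraph d) fun v => rank d (code d v) := by
  refine ⟨fun u v huv => ?_, fun u v w huw hwv huv h => ?_⟩
  · obtain ⟨i, rfl⟩ := cubeGraph_adj_iff.1 huv
    simp only [code_update_not]
    exact (rank_xor_ne label_ne_zero (testBit_log2_label i.isLt) _).symm
  · obtain ⟨i, rfl⟩ := cubeGraph_adj_iff.1 huw.symm
    obtain ⟨j, rfl⟩ := cubeGraph_adj_iff.1 hwv
    have hij : label d i ≠ label d j := fun h =>
      huv (congrArg (fun k => Function.update w k (!w k)) (Fin.ext (label_injOn i.isLt j.isLt h)))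
    simp only [code_update_not] at h ⊢
    exact rank_xor_lt_rank label_ne_zero label_ne_zero (testBit_log2_label i.isLt)
      (testBit_log2_label j.isLt) hij h

end CubeTwoRanking

/-- The 2-ranking number of the `d`-dimensional hypercube is `d + 1`. -/
theorem twoRankingNumber_cube (d : ℕ) : twoRankingNumber (cubeGraph d) = d + 1 := by
  have hmem : d + 1 ∈ {n | ∃ f, IsTwoRanking (cubeGraph d) f ∧ ∀ v, f v < n} :=
    ⟨_, CubeTwoRanking.isTwoRanking_rank_code d,
      fun v => Nat.lt_succ_of_le (CubeTwoRanking.rank_le d _)⟩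
  refine le_antisymm (Nat.sInf_le hmem) (le_csInf ⟨_, hmem⟩ ?_)
  rintro n ⟨f, hf, hn⟩
  exact hf.succ_le_of_cubeGraph hn
end

section
/- For all positive integers a, b, c, d, the 2-ranking number satisfies χ₂(K_{ac} □ K_{bd}) ≤ χ₂(K_a □ K_b) · χ₂(K_c □ K_d). -/
/-!
Identify `Fin (a * c)` with `Fin a × Fin c`, so that a vertex of `K_{ac} □ K_{bd}` becomes a pair
`(p, q)` of a vertex `p` of `K_a □ K_b` and a vertex `q` of `K_c □ K_d`. Given optimal 2-rankings
`f` and `g` of these, rank `(p, q)` lexicographically by `f p * n + g q`, with `n = χ₂(K_c □ K_d)`.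
An edge either moves `p` along an edge or keeps `p` and moves `q` along an edge. So on a path
`u, w, v` with equally ranked ends, either `p` is constant and `g` does the work, or `f` does.
The exception, `p` leaving and coming back, forces `u` and `v` to be adjacent in a rook's graph.
-/

open SimpleGraph Function

theorem Nat.mul_add_lt_mul_add {n f₁ f₂ g₁ g₂ : ℕ} (hf : f₁ < f₂) (hg : g₁ < n) :
    f₁ * n + g₁ < f₂ * n + g₂ := by
  nlinarith

theorem Nat.eq_and_eq_of_mul_add_eq {n f₁ f₂ g₁ g₂ : ℕ} (hg₁ : g₁ < n) (hg₂ : g₂ < n)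
    (h : f₁ * n + g₁ = f₂ * n + g₂) : f₁ = f₂ ∧ g₁ = g₂ := by
  obtain hlt | rfl | hgt := lt_trichotomy f₁ f₂
  · exact absurd h (Nat.mul_add_lt_mul_add hlt hg₁).ne
  · exact ⟨rfl, by omega⟩
  · exact absurd h (Nat.mul_add_lt_mul_add hgt hg₂).ne'

def SimpleGraph.Iso.boxProd {α α' β β' : Type*} {G : SimpleGraph α} {G' : SimpleGraph α'}
    {H : SimpleGraph β} {H' : SimpleGraph β'} (e₁ : G ≃g G') (e₂ : H ≃g H') :
    (G □ H) ≃g (G' □ H') where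
  toEquiv := e₁.toEquiv.prodCongr e₂.toEquiv
  map_rel_iff' := by simp [boxProd_adj, Iso.map_adj_iff]

section TwoRanking

variable {V W : Type*} {G : SimpleGraph V}

theorem isTwoRanking_of_injective {f : V → ℕ} (hf : Injective f) : IsTwoRanking G f :=
  ⟨fun _ _ huv h => huv.ne (hf h), fun _ _ _ _ _ huv h => absurd (hf h) huv⟩

theorem IsTwoRanking.comap {G' : SimpleGraph W} {f : W → ℕ} (hf : IsTwoRanking G' f)
    (φ : G →g G') (hφ : Injective φ) : IsTwoRanking G (f ∘ φ) :=
  ⟨fun _ _ huv => hf.1 _ _ (φ.map_adj huv),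
    fun _ _ _ huw hwv huv => hf.2 _ _ _ (φ.map_adj huw) (φ.map_adj hwv) (hφ.ne huv)⟩

theorem twoRankingNumber_le {f : V → ℕ} {n : ℕ} (hf : IsTwoRanking G f) (hfn : ∀ v, f v < n) :
    twoRankingNumber G ≤ n :=
  Nat.sInf_le ⟨f, hf, hfn⟩

theorem exists_isTwoRanking_lt_twoRankingNumber [Finite V] (G : SimpleGraph V) :
    ∃ f, IsTwoRanking G f ∧ ∀ v, f v < twoRankingNumber G := by
  obtain ⟨k, ⟨e⟩⟩ := Finite.exists_equiv_fin V
  exact Nat.sInf_mem (s := {n | ∃ f : V → ℕ, IsTwoRanking G f ∧ ∀ v, f v < n})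
    ⟨k, fun v => e v, isTwoRanking_of_injective (Fin.val_injective.comp e.injective),
      fun v => (e v).isLt⟩

theorem IsTwoRanking.lex {W₁ W₂ : Type*} {H₁ : SimpleGraph W₁} {H₂ : SimpleGraph W₂}
    {f : W₁ → ℕ} {g : W₂ → ℕ} {n : ℕ} (hf : IsTwoRanking H₁ f) (hg : IsTwoRanking H₂ g)
    (hgn : ∀ w, g w < n) (p : V → W₁) (q : V → W₂) (hpq : Injective fun v => (p v, q v))
    (hadj : ∀ u v, G.Adj u v → H₁.Adj (p u) (p v) ∨ p u = p v ∧ H₂.Adj (q u) (q v))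
    (hreturn : ∀ u v w, G.Adj u w → G.Adj w v → u ≠ v → p u = p v → p u ≠ p w → G.Adj u v) :
    IsTwoRanking G fun v => f (p v) * n + g (q v) := by
  have hdecode : ∀ {u v}, f (p u) * n + g (q u) = f (p v) * n + g (q v) →
      f (p u) = f (p v) ∧ g (q u) = g (q v) :=
    Nat.eq_and_eq_of_mul_add_eq (hgn _) (hgn _)
  have hedge : ∀ u v, G.Adj u v → f (p u) * n + g (q u) ≠ f (p v) * n + g (q v) := by
    intro u v huv h
    obtain ⟨hfuv, hguv⟩ := hdecode h
    obtain hp | ⟨-, hq⟩ := hadj u v huv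
    exacts [hf.1 _ _ hp hfuv, hg.1 _ _ hq hguv]
  refine ⟨hedge, fun u v w huw hwv huv h => ?_⟩
  obtain ⟨hfuv, hguv⟩ := hdecode h
  obtain hpuw | ⟨hpuw, hquw⟩ := hadj u w huw <;> obtain hpwv | ⟨hpwv, hqwv⟩ := hadj w v hwv
  · by_cases hpuv : p u = p v
    · exact absurd h (hedge u v (hreturn u v w huw hwv huv hpuv hpuw.ne))
    · exact Nat.mul_add_lt_mul_add (hf.2 _ _ _ hpuw hpwv hpuv hfuv) (hgn _)
  · exact absurd (hfuv.trans (congrArg f hpwv).symm) (hf.1 _ _ hpuw)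
  · exact absurd ((congrArg f hpuw).symm.trans hfuv) (hf.1 _ _ hpwv)
  · have hquv : q u ≠ q v := fun hq => huv (hpq (Prod.ext (hpuw.trans hpwv) hq))
    show f (p u) * n + g (q u) < f (p w) * n + g (q w)
    rw [hpuw]
    exact Nat.add_lt_add_left (hg.2 _ _ _ hquw hqwv hquv hguv) _

end TwoRanking

theorem isTwoRanking_boxProd_top_prod {α β γ δ : Type*}
    {f : α × β → ℕ} {g : γ × δ → ℕ} {n : ℕ}
    (hf : IsTwoRanking ((⊤ : SimpleGraph α) □ (⊤ : SimpleGraph β)) f)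
    (hg : IsTwoRanking ((⊤ : SimpleGraph γ) □ (⊤ : SimpleGraph δ)) g) (hgn : ∀ w, g w < n) :
    IsTwoRanking ((⊤ : SimpleGraph (α × γ)) □ (⊤ : SimpleGraph (β × δ)))
      fun v : (α × γ) × β × δ => f (v.1.1, v.2.1) * n + g (v.1.2, v.2.2) := by
  refine hf.lex hg hgn (fun v : (α × γ) × β × δ => (v.1.1, v.2.1)) (fun v => (v.1.2, v.2.2))
    ?_ ?_ ?_
  · rintro ⟨⟨_, _⟩, _, _⟩ ⟨⟨_, _⟩, _, _⟩ h
    simp_all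
  · rintro ⟨⟨_, _⟩, _, _⟩ ⟨⟨_, _⟩, _, _⟩
    simp only [boxProd_adj, top_adj, ne_eq, Prod.mk.injEq]
    tauto
  · rintro ⟨⟨_, _⟩, _, _⟩ ⟨⟨_, _⟩, _, _⟩ ⟨⟨_, _⟩, _, _⟩
    simp only [boxProd_adj, top_adj, ne_eq, Prod.mk.injEq]
    rintro (⟨_, rfl, rfl⟩ | ⟨_, rfl, rfl⟩) (⟨_, rfl, rfl⟩ | ⟨_, rfl, rfl⟩) <;> tauto

open SimpleGraph in
theorem twoRankingNumber_boxProd_complete_mul_general (a b c d : ℕ) :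
    twoRankingNumber ((⊤ : SimpleGraph (Fin (a * c))) □ (⊤ : SimpleGraph (Fin (b * d)))) ≤
      twoRankingNumber ((⊤ : SimpleGraph (Fin a)) □ (⊤ : SimpleGraph (Fin b))) *
        twoRankingNumber ((⊤ : SimpleGraph (Fin c)) □ (⊤ : SimpleGraph (Fin d))) := by
  obtain ⟨f, hf, hfm⟩ := exists_isTwoRanking_lt_twoRankingNumber
    ((⊤ : SimpleGraph (Fin a)) □ (⊤ : SimpleGraph (Fin b)))
  obtain ⟨g, hg, hgn⟩ := exists_isTwoRanking_lt_twoRankingNumber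
    ((⊤ : SimpleGraph (Fin c)) □ (⊤ : SimpleGraph (Fin d)))
  let e := (Iso.completeGraph (finProdFinEquiv (m := a) (n := c)).symm).boxProd
    (Iso.completeGraph (finProdFinEquiv (m := b) (n := d)).symm)
  refine twoRankingNumber_le
    ((isTwoRanking_boxProd_top_prod hf hg hgn).comap e.toHom e.injective) fun v => ?_
  simpa using Nat.mul_add_lt_mul_add (g₂ := 0) (hfm _) (hgn _)

open SimpleGraph in
/-- `χ₂(K_{ac} □ K_{bd}) ≤ χ₂(K_a □ K_b) · χ₂(K_c □ K_d)` for positive integers `a,b,c,d`. -/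
theorem twoRankingNumber_boxProd_complete_mul (a b c d : ℕ) (ha : 0 < a) (hb : 0 < b)
    (hc : 0 < c) (hd : 0 < d) :
    twoRankingNumber ((⊤ : SimpleGraph (Fin (a * c))) □ (⊤ : SimpleGraph (Fin (b * d)))) ≤
      twoRankingNumber ((⊤ : SimpleGraph (Fin a)) □ (⊤ : SimpleGraph (Fin b))) *
        twoRankingNumber ((⊤ : SimpleGraph (Fin c)) □ (⊤ : SimpleGraph (Fin d))) :=
  twoRankingNumber_boxProd_complete_mul_general a b c d
end

section
/- If m and n are powers of 2 with m ≤ n, then χ₂(K_m □ K_n) ≤ n · m^{log₂(3) − 1}. -/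
/-!
Write the vertex `(a, b)` of `K_m □ K_n` as a cell of an `m × n` table. A 2-ranking is then a
table with distinct entries in each row and each column such that, whenever two cells in
different rows and columns have equal rank, the two other corners of their rectangle rank
higher. Such tables multiply: if `r` and `s` are tables with `R` and `S` ranks, then
`(a, a'), (b, b') ↦ s a' b' + S * r a b` is a table with `R * S` ranks, indexed by pairs.
The `2 × 2` table `[[1, 0], [0, 2]]` uses 3 ranks, so its `i`-th power is a `2^i × 2^i` table
with `3^i` ranks; its product with the `1 × 2^(j-i)` table `[[0, 1, …]]` is a `2^i × 2^j` table
with `2^(j-i) * 3^i = 2^j * (2^i)^(log₂ 3 - 1)` ranks.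
-/

open Function SimpleGraph

structure IsGridRanking {α β : Type*} (r : α → β → ℕ) : Prop where
  injective_right : ∀ a, Injective (r a)
  injective_left : ∀ b, Injective (r · b)
  lt_of_eq : ∀ a c b d, a ≠ c → b ≠ d → r a b = r c d → r a b < r a d

def HasGridRanking (α β : Type*) (N : ℕ) : Prop :=
  ∃ r : α → β → ℕ, IsGridRanking r ∧ ∀ a b, r a b < N

theorem Nat.eq_and_eq_of_add_mul_eq {S x x' y y' : ℕ} (hx : x < S) (hx' : x' < S)
    (h : x + S * y = x' + S * y') : x = x' ∧ y = y' := by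
  have hS : 0 < S := by omega
  obtain ⟨hy, hx⟩ := (Nat.div_mod_unique hS).2 ⟨h, hx⟩
  obtain ⟨hy', hx'⟩ := (Nat.div_mod_unique hS).2 ⟨rfl, hx'⟩
  exact ⟨hx.symm.trans hx', hy.symm.trans hy'⟩

section

variable {α β α' β' : Type*}

theorem isGridRanking_of_subsingleton [Subsingleton α] {g : β → ℕ} (hg : Injective g) :
    IsGridRanking (fun (_ : α) b => g b) where
  injective_right _ := hg
  injective_left _ _ _ _ := Subsingleton.elim _ _
  lt_of_eq _ _ _ _ hac := absurd (Subsingleton.elim _ _) hac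

namespace IsGridRanking

variable {r : α → β → ℕ}

theorem comp_embedding (hr : IsGridRanking r) (e : α' ↪ α) (e' : β' ↪ β) :
    IsGridRanking (fun a b => r (e a) (e' b)) where
  injective_right a := (hr.injective_right (e a)).comp e'.injective
  injective_left b := (hr.injective_left (e' b)).comp e.injective
  lt_of_eq _ _ _ _ hac hbd := hr.lt_of_eq _ _ _ _ (e.injective.ne hac) (e'.injective.ne hbd)

theorem prod (hr : IsGridRanking r) {s : α' → β' → ℕ} (hs : IsGridRanking s) {S : ℕ}
    (hsS : ∀ a b, s a b < S) :
    IsGridRanking (fun (x : α × α') (y : β × β') => s x.2 y.2 + S * r x.1 y.1) := by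
  have split {a b c d a' b' c' d'} (h : s a' b' + S * r a b = s c' d' + S * r c d) :=
    Nat.eq_and_eq_of_add_mul_eq (hsS a' b') (hsS c' d') h
  refine ⟨fun ⟨a, a'⟩ ⟨b, b'⟩ ⟨d, d'⟩ h => ?_, fun ⟨b, b'⟩ ⟨a, a'⟩ ⟨c, c'⟩ h => ?_, ?_⟩
  · obtain ⟨hs_eq, hr_eq⟩ := split h
    exact Prod.ext (hr.injective_right a hr_eq) (hs.injective_right a' hs_eq)
  · obtain ⟨hs_eq, hr_eq⟩ := split h
    exact Prod.ext (hr.injective_left b hr_eq) (hs.injective_left b' hs_eq)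
  rintro ⟨a, a'⟩ ⟨c, c'⟩ ⟨b, b'⟩ ⟨d, d'⟩ hac hbd h
  obtain ⟨hs_eq, hr_eq⟩ := split h
  dsimp only at hs_eq hr_eq ⊢
  by_cases hac₁ : a = c
  · subst hac₁
    obtain rfl := hr.injective_right a hr_eq
    have hs_lt := hs.lt_of_eq a' c' b' d' (by simpa using hac) (by simpa using hbd) hs_eq
    omega
  by_cases hbd₁ : b = d
  · subst hbd₁
    exact absurd (hr.injective_left b hr_eq) hac₁
  calc s a' b' + S * r a b < S + S * r a b := by have := hsS a' b'; omega
    _ = S * (r a b + 1) := by ring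
    _ ≤ S * r a d := Nat.mul_le_mul_left _ (hr.lt_of_eq a c b d hac₁ hbd₁ hr_eq)
    _ ≤ s a' d' + S * r a d := Nat.le_add_left _ _

theorem isTwoRanking_boxProd (hr : IsGridRanking r) :
    IsTwoRanking ((⊤ : SimpleGraph α) □ (⊤ : SimpleGraph β)) (fun p => r p.1 p.2) := by
  have edge : ∀ a b c d, (a ≠ c ∧ b = d) ∨ (b ≠ d ∧ a = c) → r a b ≠ r c d := by
    rintro a b c d (⟨hac, rfl⟩ | ⟨hbd, rfl⟩)
    · exact (hr.injective_left b).ne hac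
    · exact (hr.injective_right a).ne hbd
  refine ⟨fun ⟨a, b⟩ ⟨c, d⟩ h => edge a b c d (by simpa using h), ?_⟩
  rintro ⟨a, b⟩ ⟨c, d⟩ ⟨e, f⟩ huw hwv huv h
  simp only [boxProd_adj, top_adj, ne_eq, Prod.mk.injEq] at huw hwv huv h ⊢
  have hac : a ≠ c := fun hac => edge a b c d (by tauto) h
  have hbd : b ≠ d := fun hbd => edge a b c d (by tauto) h
  -- The middle vertex of a path between opposite corners of a rectangle is another corner.
  rcases huw with ⟨-, hbf⟩ | ⟨-, hae⟩ <;> rcases hwv with ⟨-, hfd⟩ | ⟨-, hec⟩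
  · exact absurd (hbf.trans hfd) hbd
  · rw [← hbf, hec]
    exact h ▸ hr.lt_of_eq c a d b hac.symm hbd.symm h.symm
  · rw [← hae, hfd]
    exact hr.lt_of_eq a c b d hac hbd h
  · exact absurd (hae.trans hec) hac

end IsGridRanking

namespace HasGridRanking

variable {R S : ℕ}

theorem of_embedding (h : HasGridRanking α β R) (e : α' ↪ α) (e' : β' ↪ β) :
    HasGridRanking α' β' R :=
  let ⟨_, hr, hrR⟩ := h
  ⟨_, hr.comp_embedding e e', fun _ _ => hrR _ _⟩

theorem prod (h : HasGridRanking α β R) (h' : HasGridRanking α' β' S) :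
    HasGridRanking (α × α') (β × β') (R * S) := by
  obtain ⟨r, hr, hrR⟩ := h
  obtain ⟨s, hs, hsS⟩ := h'
  refine ⟨_, hr.prod hs hsS, fun ⟨a, a'⟩ ⟨b, b'⟩ => ?_⟩
  calc s a' b' + S * r a b < S * (r a b + 1) := by have := hsS a' b'; linarith
    _ ≤ S * R := Nat.mul_le_mul_left _ (hrR a b)
    _ = R * S := mul_comm _ _

theorem twoRankingNumber_boxProd_le (h : HasGridRanking α β R) :
    twoRankingNumber ((⊤ : SimpleGraph α) □ (⊤ : SimpleGraph β)) ≤ R :=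
  let ⟨_, hr, hrR⟩ := h
  Nat.sInf_le ⟨_, hr.isTwoRanking_boxProd, fun p => hrR p.1 p.2⟩

end HasGridRanking

theorem hasGridRanking_subsingleton_fin [Subsingleton α] (k : ℕ) :
    HasGridRanking α (Fin k) k :=
  ⟨_, isGridRanking_of_subsingleton Fin.val_injective, fun _ b => b.isLt⟩

end

theorem hasGridRanking_fin_two : HasGridRanking (Fin 2) (Fin 2) 3 :=
  ⟨fun a b => if a = b then 1 + a.val else 0, ⟨by decide, by decide, by decide⟩, by decide⟩

theorem hasGridRanking_fin_two_pow (i : ℕ) :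
    HasGridRanking (Fin (2 ^ i)) (Fin (2 ^ i)) (3 ^ i) := by
  induction i with
  | zero => exact hasGridRanking_subsingleton_fin (α := Fin 1) 1
  | succ i ih =>
    let e : Fin (2 ^ (i + 1)) ↪ Fin (2 ^ i) × Fin 2 :=
      ((finCongr (pow_succ 2 i)).trans finProdFinEquiv.symm).toEmbedding
    simpa only [pow_succ] using (ih.prod hasGridRanking_fin_two).of_embedding e e

theorem HasGridRanking.fin_mul {m N : ℕ} (h : HasGridRanking (Fin m) (Fin m) N) (k : ℕ) :
    HasGridRanking (Fin m) (Fin (k * m)) (k * N) :=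
  ((hasGridRanking_subsingleton_fin (α := Unit) k).prod h).of_embedding
    (Equiv.punitProd _).symm.toEmbedding finProdFinEquiv.symm.toEmbedding

theorem two_pow_mul_rpow_logb_three_sub_one {i j : ℕ} (hij : i ≤ j) :
    (2 : ℝ) ^ j * ((2 : ℝ) ^ i) ^ (Real.logb 2 3 - 1) = 2 ^ (j - i) * 3 ^ i := by
  have h32 : (2 : ℝ) ^ (Real.logb 2 3 - 1) = 3 / 2 := by
    rw [Real.rpow_sub two_pos, Real.rpow_logb two_pos (by norm_num) (by norm_num), Real.rpow_one]
  rw [← Real.rpow_natCast_mul zero_le_two, mul_comm (i : ℝ), Real.rpow_mul_natCast zero_le_two,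
    h32, ← Nat.sub_add_cancel hij, pow_add, Nat.add_sub_cancel, mul_assoc, ← mul_pow]
  norm_num

open SimpleGraph in
/-- If `m` and `n` are powers of 2 with `m ≤ n`, then
`χ₂(K_m □ K_n) ≤ n · m^(log₂ 3 − 1)`. -/
theorem twoRankingNumber_boxProd_complete_pow_two (m n : ℕ) (hm : ∃ i : ℕ, m = 2 ^ i)
    (hn : ∃ j : ℕ, n = 2 ^ j) (hmn : m ≤ n) :
    (twoRankingNumber ((⊤ : SimpleGraph (Fin m)) □ (⊤ : SimpleGraph (Fin n))) : ℝ) ≤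
      (n : ℝ) * (m : ℝ) ^ (Real.logb 2 3 - 1) := by
  obtain ⟨i, rfl⟩ := hm
  obtain ⟨j, rfl⟩ := hn
  have hij : i ≤ j := (Nat.pow_le_pow_iff_right one_lt_two).1 hmn
  have hχ := ((hasGridRanking_fin_two_pow i).fin_mul (2 ^ (j - i))).twoRankingNumber_boxProd_le
  rw [← pow_add, Nat.sub_add_cancel hij] at hχ
  push_cast
  rw [two_pow_mul_rpow_logb_three_sub_one hij]
  exact_mod_cast hχ
end

section
/- For all positive integers m and n with m ≤ n, χ₂(K_m □ K_n) < 3 · n · m^{log₂(3) − 1}. -/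
/-!
On the rook's graph `K_α □ K_β` two vertices with the same rank must lie in different rows and
columns, and the two remaining corners of the rectangle they span must get higher ranks. The
4-cycle `K₂ □ K₂` is ranked with 3 ranks, one diagonal sharing the lowest one. A ranking of
a product of rook's graphs is obtained by reading two rankings as the low and the high digit of a
number in base `A`, so `K_{2^k} □ K_{2^k}` has a 2-ranking with `3^k` ranks. If `m ≤ 2^k < 2m`,
then `K_m □ K_n` embeds into `⌈n / 2^k⌉` such rook's graphs side by side, whose ranks are kept
apart by offsets that are multiples of `3^k`; this uses
`3^k ⌈n / 2^k⌉ ≤ 2n (3/2)^k < 3n m^(log₂ 3 - 1)` ranks.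
-/

open SimpleGraph Function

/-- The 2-ranking condition on `K_α □ K_β`: of the two corners `(u.1, v.2)` and `(v.1, u.2)` of
the rectangle spanned by `u` and `v`, the second is covered by swapping `u` and `v`. -/
def IsRookRanking {α β : Type*} (f : α × β → ℕ) : Prop :=
  ∀ u v, u ≠ v → f u = f v → f u < f (u.1, v.2)

def RookRankable (α β : Type*) (A : ℕ) : Prop :=
  ∃ f : α × β → ℕ, IsRookRanking f ∧ ∀ u, f u < A

lemma Nat.eq_and_eq_of_add_mul_eq_s5 {A x y p q : ℕ} (hx : x < A) (hy : y < A)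
    (h : x + A * p = y + A * q) : x = y ∧ p = q := by
  have hA : 0 < A := by omega
  have hpq : p = q := by
    simpa [Nat.add_mul_div_left _ _ hA, Nat.div_eq_of_lt hx, Nat.div_eq_of_lt hy]
      using congrArg (· / A) h
  subst hpq
  exact ⟨by omega, rfl⟩

namespace IsRookRanking

variable {α β α' β' : Type*} {f : α × β → ℕ}

theorem fst_ne (hf : IsRookRanking f) {u v : α × β} (huv : u ≠ v) (h : f u = f v) :
    u.1 ≠ v.1 := by
  intro h₁
  have hv : (u.1, v.2) = v := Prod.ext h₁ rfl
  exact (hf u v huv h).ne (by rw [hv, h])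

theorem snd_ne (hf : IsRookRanking f) {u v : α × β} (huv : u ≠ v) (h : f u = f v) :
    u.2 ≠ v.2 := by
  intro h₂
  have hv : (v.1, u.2) = v := Prod.ext rfl h₂
  exact (hf v u huv.symm h.symm).ne (by rw [hv])

theorem isTwoRanking (hf : IsRookRanking f) :
    IsTwoRanking ((⊤ : SimpleGraph α) □ (⊤ : SimpleGraph β)) f := by
  refine ⟨fun _ _ hadj h => ?_, fun u v w huw hwv huv h => ?_⟩
  · rcases boxProd_adj.1 hadj with ⟨-, h₂⟩ | ⟨-, h₁⟩
    · exact hf.snd_ne hadj.ne h h₂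
    · exact hf.fst_ne hadj.ne h h₁
  · have h₁ := hf.fst_ne huv h
    have h₂ := hf.snd_ne huv h
    rcases boxProd_adj.1 huw with ⟨-, hu₂⟩ | ⟨-, hu₁⟩ <;>
      rcases boxProd_adj.1 hwv with ⟨-, hv₂⟩ | ⟨-, hv₁⟩
    · exact absurd (hu₂.trans hv₂) h₂
    · have hw : w = (v.1, u.2) := Prod.ext hv₁ hu₂.symm
      exact hw ▸ h ▸ hf v u huv.symm h.symm
    · have hw : w = (u.1, v.2) := Prod.ext hu₁.symm hv₂
      exact hw ▸ hf u v huv h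
    · exact absurd (hu₁.trans hv₁) h₁

theorem comp_prodMap (hf : IsRookRanking f) {e₁ : α' → α} {e₂ : β' → β}
    (h₁ : Injective e₁) (h₂ : Injective e₂) : IsRookRanking (f ∘ Prod.map e₁ e₂) :=
  fun _ _ huv h => hf _ _ ((h₁.prodMap h₂).ne huv) h

theorem add_mul {g : α' × β' → ℕ} {A : ℕ} (hf : IsRookRanking f) (hfA : ∀ u, f u < A)
    (hg : IsRookRanking g) :
    IsRookRanking fun u : (α × α') × (β × β') =>
      f (u.1.1, u.2.1) + A * g (u.1.2, u.2.2) := by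
  rintro ⟨⟨a, a'⟩, b, b'⟩ ⟨⟨c, c'⟩, d, d'⟩ huv h
  obtain ⟨hlow, hhigh⟩ := Nat.eq_and_eq_of_add_mul_eq_s5 (hfA _) (hfA _) h
  show f (a, b) + A * g (a', b') < f (a, d) + A * g (a', d')
  by_cases hc : (a', b') = (c', d')
  · obtain ⟨rfl, rfl⟩ := Prod.mk.inj hc
    have hne : (a, b) ≠ (c, d) := fun he => huv (by simp_all)
    have hcorner : f (a, b) < f (a, d) := hf _ _ hne hlow
    omega
  · have hcorner : g (a', b') < g (a', d') := hg _ _ hc hhigh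
    calc f (a, b) + A * g (a', b') < A * (g (a', b') + 1) := by linarith [hfA (a, b)]
      _ ≤ A * g (a', d') := Nat.mul_le_mul_left A hcorner
      _ ≤ f (a, d) + A * g (a', d') := Nat.le_add_left _ _

end IsRookRanking

namespace RookRankable

variable {α β α' β' : Type*} {A B : ℕ}

theorem of_card_le [Fintype α] [Fintype β] [Fintype α'] [Fintype β'] (h : RookRankable α β A)
    (h₁ : Fintype.card α' ≤ Fintype.card α) (h₂ : Fintype.card β' ≤ Fintype.card β) :
    RookRankable α' β' A := by
  obtain ⟨f, hf, hfA⟩ := h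
  obtain ⟨e₁⟩ := Embedding.nonempty_of_card_le h₁
  obtain ⟨e₂⟩ := Embedding.nonempty_of_card_le h₂
  exact ⟨_, hf.comp_prodMap e₁.injective e₂.injective, fun _ => hfA _⟩

theorem mul (h : RookRankable α β A) (h' : RookRankable α' β' B) :
    RookRankable (α × α') (β × β') (A * B) := by
  obtain ⟨f, hf, hfA⟩ := h
  obtain ⟨g, hg, hgB⟩ := h'
  refine ⟨_, hf.add_mul hfA hg, fun u => ?_⟩
  have := hfA (u.1.1, u.2.1)
  have := hgB (u.1.2, u.2.2)
  calc f (u.1.1, u.2.1) + A * g (u.1.2, u.2.2) < A * (g (u.1.2, u.2.2) + 1) := by linarith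
    _ ≤ A * B := Nat.mul_le_mul_left A this

theorem twoRankingNumber_le (h : RookRankable α β A) :
    twoRankingNumber ((⊤ : SimpleGraph α) □ (⊤ : SimpleGraph β)) ≤ A :=
  let ⟨f, hf, hfA⟩ := h
  Nat.sInf_le ⟨f, hf.isTwoRanking, hfA⟩

end RookRankable

theorem rookRankable_unit_fin (N : ℕ) : RookRankable Unit (Fin N) N :=
  ⟨fun u => u.2, fun _ _ huv h => (huv (Prod.ext rfl (Fin.ext h))).elim, fun u => u.2.isLt⟩

theorem rookRankable_fin_two : RookRankable (Fin 2) (Fin 2) 3 :=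
  ⟨fun u => ![![0, 1], ![2, 0]] u.1 u.2, by unfold IsRookRanking; decide, by decide⟩

theorem rookRankable_two_pow (k : ℕ) : RookRankable (Fin (2 ^ k)) (Fin (2 ^ k)) (3 ^ k) := by
  induction k with
  | zero => exact (rookRankable_unit_fin 1).of_card_le (by simp) (by simp)
  | succ k ih =>
    rw [pow_succ' 3]
    exact (rookRankable_fin_two.mul ih).of_card_le (by simp [pow_succ']) (by simp [pow_succ'])

theorem twoRankingNumber_boxProd_complete_le {m n k N : ℕ} (hm : m ≤ 2 ^ k)
    (hn : n ≤ 2 ^ k * N) :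
    twoRankingNumber ((⊤ : SimpleGraph (Fin m)) □ (⊤ : SimpleGraph (Fin n))) ≤ 3 ^ k * N :=
  (((rookRankable_two_pow k).mul (rookRankable_unit_fin N)).of_card_le
    (by simpa using hm) (by simpa using hn)).twoRankingNumber_le

lemma Nat.exists_le_two_pow_lt_two_mul {m : ℕ} (hm : 0 < m) :
    ∃ k, m ≤ 2 ^ k ∧ 2 ^ k < 2 * m := by
  rcases (by omega : m = 1 ∨ 1 < m) with rfl | h
  · exact ⟨0, by norm_num⟩
  refine ⟨clog 2 m, le_pow_clog one_lt_two m, ?_⟩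
  have hlt := pow_pred_clog_lt_self one_lt_two h
  calc 2 ^ clog 2 m = 2 * 2 ^ (clog 2 m).pred := by
        rw [← pow_succ', Nat.succ_pred_eq_of_pos (clog_pos one_lt_two h)]
    _ < 2 * m := by omega

lemma Nat.mul_ceilDiv_le_two_mul {M n : ℕ} (hM : M ≤ 2 * n) : M * (n ⌈/⌉ M) ≤ 2 * n := by
  rcases le_or_gt n M with hnM | hMn
  · rcases M.eq_zero_or_pos with rfl | hM0
    · simp
    have hone : n ⌈/⌉ M ≤ 1 := (ceilDiv_le_iff_le_mul hM0).2 (by simpa using hnM)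
    calc M * (n ⌈/⌉ M) ≤ M * 1 := Nat.mul_le_mul_left M hone
      _ ≤ 2 * n := by simpa using hM
  · have hdiv : M * (n ⌈/⌉ M) ≤ n + M - 1 := by
      rw [ceilDiv_eq_add_pred_div]
      exact Nat.mul_div_le _ _
    omega

lemma three_halves_pow_lt {k m : ℕ} (h : 2 ^ k < 2 * m) :
    (3 / 2 : ℝ) ^ k < 3 / 2 * (m : ℝ) ^ (Real.logb 2 3 - 1) := by
  set c := Real.logb 2 3 - 1
  have hc : (2 : ℝ) ^ c = 3 / 2 := by
    rw [Real.rpow_sub_one two_ne_zero, Real.rpow_logb (by norm_num) (by norm_num) (by norm_num)]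
  have hc0 : 0 < c := by
    have : Real.logb 2 2 < Real.logb 2 3 :=
      Real.logb_lt_logb one_lt_two (by norm_num) (by norm_num)
    rw [Real.logb_self_eq_one one_lt_two] at this
    linarith
  calc (3 / 2 : ℝ) ^ k = ((2 : ℝ) ^ k) ^ c := by rw [← hc, Real.rpow_pow_comm zero_le_two]
    _ < (2 * m : ℝ) ^ c := Real.rpow_lt_rpow (by positivity) (by exact_mod_cast h) hc0
    _ = 3 / 2 * (m : ℝ) ^ c := by rw [Real.mul_rpow zero_le_two m.cast_nonneg, hc]

open SimpleGraph in
theorem twoRankingNumber_boxProd_complete_lt_general (m n : ℕ) (hm : 0 < m) (hmn : m ≤ n) :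
    (twoRankingNumber ((⊤ : SimpleGraph (Fin m)) □ (⊤ : SimpleGraph (Fin n))) : ℝ) <
      3 * (n : ℝ) * (m : ℝ) ^ (Real.logb 2 3 - 1) := by
  obtain ⟨k, hmk, hkm⟩ := Nat.exists_le_two_pow_lt_two_mul hm
  set N := n ⌈/⌉ 2 ^ k
  have hχ := twoRankingNumber_boxProd_complete_le hmk
    (le_smul_ceilDiv (a := 2 ^ k) (b := n) (by positivity))
  have hN : 2 ^ k * N ≤ 2 * n := Nat.mul_ceilDiv_le_two_mul (by omega)
  have hn : (0 : ℝ) < n := by exact_mod_cast hm.trans_le hmn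
  calc (twoRankingNumber ((⊤ : SimpleGraph (Fin m)) □ (⊤ : SimpleGraph (Fin n))) : ℝ)
      ≤ 3 ^ k * N := by exact_mod_cast hχ
    _ = (3 / 2) ^ k * (2 ^ k * N) := by rw [div_pow]; field_simp
    _ ≤ (3 / 2) ^ k * (2 * n) := by gcongr (3 / 2 : ℝ) ^ k * ?_; exact_mod_cast hN
    _ < 3 / 2 * (m : ℝ) ^ (Real.logb 2 3 - 1) * (2 * n) := by
      gcongr; exact three_halves_pow_lt hkm
    _ = 3 * n * (m : ℝ) ^ (Real.logb 2 3 - 1) := by ring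

open SimpleGraph in
/-- For all positive integers `m ≤ n`, `χ₂(K_m □ K_n) < 3 · n · m^(log₂ 3 − 1)`. -/
theorem twoRankingNumber_boxProd_complete_lt (m n : ℕ) (hm : 0 < m) (hn : 0 < n)
    (hmn : m ≤ n) :
    (twoRankingNumber ((⊤ : SimpleGraph (Fin m)) □ (⊤ : SimpleGraph (Fin n))) : ℝ) <
      3 * (n : ℝ) * (m : ℝ) ^ (Real.logb 2 3 - 1) :=
  twoRankingNumber_boxProd_complete_lt_general m n hm hmn
end

section
/- Let A be an (m × n)-matrix encoding a 2-ranking of K_m □ K_n (so A(i,j) is the rank of vertex (u_i, v_j)). Then for every column j and every k with 1 ≤ k ≤ m, there exist k distinct ranks, each appearing in column j, such that each of these ranks is assigned to at most k vertices of the whole graph. -/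
/-!
A rank `r` that appears in column `j`, say at `(i, j)`, can appear at most once in each row,
and in any other row `i'` only off column `j`; the path `(i, j) — (i', j) — (i', j')` then
forces `A i' j > r`. So the rows carrying `r` inject into the rows whose column-`j` entry is
at least `r`. Taking for `R` the `k` largest entries of column `j` gives at most `k` such
rows for every `r ∈ R`.
-/

open Finset SimpleGraph

theorem Finset.exists_upward_closed_subset_card_eq {α : Type*} [LinearOrder α] {s : Finset α}
    {k : ℕ} (hk : k ≤ #s) :
    ∃ t ⊆ s, #t = k ∧ ∀ a ∈ t, ∀ b ∈ s, a ≤ b → b ∈ t := by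
  induction k with
  | zero => exact ⟨∅, empty_subset s, card_empty, by simp⟩
  | succ k ih =>
    obtain ⟨t, hts, htk, ht⟩ := ih (by omega)
    have hne : (s \ t).Nonempty := by
      rw [← card_pos, card_sdiff_of_subset hts]
      omega
    set c := (s \ t).max' hne
    obtain ⟨hcs, hct⟩ := mem_sdiff.mp ((s \ t).max'_mem hne)
    refine ⟨insert c t, insert_subset hcs hts, by rw [card_insert_of_notMem hct, htk],
      fun a ha b hb hab => ?_⟩
    by_cases hbt : b ∈ t
    · exact mem_insert_of_mem hbt
    have hbc : b ≤ c := (s \ t).le_max' b (mem_sdiff.mpr ⟨hb, hbt⟩)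
    rcases mem_insert.mp ha with rfl | hat
    · exact mem_insert.mpr (Or.inl (le_antisymm hbc hab))
    · exact absurd (ht a hat b hb hab) hbt

namespace IsTwoRanking

variable {m n : ℕ} {A : Fin m → Fin n → ℕ}
  (hA : IsTwoRanking ((⊤ : SimpleGraph (Fin m)) □ (⊤ : SimpleGraph (Fin n)))
    (fun p => A p.1 p.2))
include hA

theorem column_injective (j : Fin n) : Function.Injective (fun i => A i j) := by
  intro i i' h
  by_contra hne
  exact hA.1 (i, j) (i', j) (by simp [boxProd_adj, hne]) h

theorem row_injective (i : Fin m) : Function.Injective (A i) := by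
  intro j j' h
  by_contra hne
  exact hA.1 (i, j) (i, j') (by simp [boxProd_adj, hne]) h

theorem lt_of_eq_of_ne {i i' : Fin m} {j j' : Fin n} (h : A i' j' = A i j) (hii' : i ≠ i') :
    A i j < A i' j := by
  have hjj' : j ≠ j' := by
    rintro rfl
    exact hii' (hA.column_injective j h.symm)
  exact hA.2 (i, j) (i', j') (i', j) (by simp [boxProd_adj, hii']) (by simp [boxProd_adj, hjj'])
    (by simp [hii']) h.symm

theorem card_filter_eq_le_card_filter_le (i : Fin m) (j : Fin n) :
    #{p : Fin m × Fin n | A p.1 p.2 = A i j} ≤ #{i' | A i j ≤ A i' j} := by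
  refine card_le_card_of_injOn Prod.fst (fun p hp => ?_) (fun p hp q hq hpq => ?_)
  · simp only [coe_filter, Set.mem_ofPred_eq, mem_univ, true_and] at hp ⊢
    rcases eq_or_ne i p.1 with rfl | hne
    · exact le_rfl
    · exact (hA.lt_of_eq_of_ne hp hne).le
  · simp only [coe_filter, mem_univ, true_and, Set.mem_ofPred_eq] at hp hq
    refine Prod.ext hpq (hA.row_injective p.1 ?_)
    rw [hp, hpq, hq]

end IsTwoRanking

open SimpleGraph in
theorem column_rank_restriction_general (m n : ℕ) (A : Fin m → Fin n → ℕ)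
    (hA : IsTwoRanking ((⊤ : SimpleGraph (Fin m)) □ (⊤ : SimpleGraph (Fin n)))
      (fun p => A p.1 p.2))
    (j : Fin n) (k : ℕ) (hkm : k ≤ m) :
    ∃ R : Finset ℕ, R.card = k ∧ (∀ r ∈ R, ∃ i : Fin m, A i j = r) ∧
      ∀ r ∈ R, (Finset.univ.filter fun p : Fin m × Fin n => A p.1 p.2 = r).card ≤ k := by
  set C := univ.image fun i => A i j
  have hC : #C = m := by rw [card_image_of_injective _ (hA.column_injective j), card_fin]
  obtain ⟨R, hRC, hRk, hR⟩ := exists_upward_closed_subset_card_eq (hC ▸ hkm : k ≤ #C)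
  have hRcol : ∀ r ∈ R, ∃ i, A i j = r := fun r hr => by simpa [C] using hRC hr
  refine ⟨R, hRk, hRcol, fun r hr => ?_⟩
  obtain ⟨i, rfl⟩ := hRcol _ hr
  calc #{p : Fin m × Fin n | A p.1 p.2 = A i j}
      ≤ #{i' | A i j ≤ A i' j} := hA.card_filter_eq_le_card_filter_le i j
    _ ≤ #R := card_le_card_of_injOn (fun i' => A i' j)
        (fun i' hi' => hR _ hr _ (mem_image_of_mem _ (mem_univ i')) (by simpa using hi'))
        (hA.column_injective j).injOn
    _ = k := hRk

open SimpleGraph in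
/-- If the matrix `A` encodes a 2-ranking of `K_m □ K_n` (entry `A i j` is the rank of the
vertex `(i, j)`), then for every column `j` and every `k` with `1 ≤ k ≤ m`, there are `k`
distinct ranks, each appearing in column `j`, such that each of these ranks is assigned to
at most `k` vertices of the whole graph. -/
theorem column_rank_restriction (m n : ℕ) (A : Fin m → Fin n → ℕ)
    (hA : IsTwoRanking ((⊤ : SimpleGraph (Fin m)) □ (⊤ : SimpleGraph (Fin n)))
      (fun p => A p.1 p.2))
    (j : Fin n) (k : ℕ) (hk1 : 1 ≤ k) (hkm : k ≤ m) :
    ∃ R : Finset ℕ, R.card = k ∧ (∀ r ∈ R, ∃ i : Fin m, A i j = r) ∧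
      ∀ r ∈ R, (Finset.univ.filter fun p : Fin m × Fin n => A p.1 p.2 = r).card ≤ k :=
  column_rank_restriction_general m n A hA j k hkm
end

section
/- If m and n are positive integers and m! divides n, then χ₂(K_m □ K_n) = n · H_m, where H_m = 1 + 1/2 + ⋯ + 1/m. -/
/-!
In a 2-ranking of `K_m □ K_n`, two cells of equal rank lie in different rows and columns, and
both other corners of the rectangle they span have higher rank. So the rank class of a cell `v`
injects, via rows, into `v` together with the cells above `v` in its column; as the ranks in a
column are distinct, summing `1 / |class v|` over all cells (which counts the ranks) gives at
least `n · H_m`.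

For the matching construction on `(m + 1) × (m + 1) q` cells, split the columns into `m + 1`
blocks of `q`; in block `p`, row `p` gets the ranks `0, …, q - 1`, and the remaining `m × q`
grid gets an optimal ranking of `K_m □ K_q`, shifted above the ranks of row `p` and of the
earlier blocks. This uses `q + (m + 1) · q H_m = (m + 1) q H_{m+1}` ranks.
-/

open Finset SimpleGraph

section BoxProdTop

variable {α β γ : Type*}

theorem boxProd_top_adj_iff {u v : α × β} :
    ((⊤ : SimpleGraph α) □ (⊤ : SimpleGraph β)).Adj u v ↔
      u ≠ v ∧ (u.1 = v.1 ∨ u.2 = v.2) := by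
  rcases u with ⟨a, b⟩; rcases v with ⟨a', b'⟩
  simp only [boxProd_adj, top_adj, ne_eq, Prod.mk.injEq]
  tauto

theorem isTwoRanking_boxProd_top_iff {f : α × β → ℕ} :
    IsTwoRanking ((⊤ : SimpleGraph α) □ (⊤ : SimpleGraph β)) f ↔
      ∀ u v, u ≠ v → f u = f v → u.1 ≠ v.1 ∧ u.2 ≠ v.2 ∧ f u < f (v.1, u.2) := by
  simp only [IsTwoRanking, boxProd_top_adj_iff]
  constructor
  · rintro ⟨hedge, hpath⟩ u v huv he
    have hrow : u.1 ≠ v.1 := fun h => hedge u v ⟨huv, .inl h⟩ he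
    have hcol : u.2 ≠ v.2 := fun h => hedge u v ⟨huv, .inr h⟩ he
    refine ⟨hrow, hcol, hpath u v _ ⟨?_, .inr rfl⟩ ⟨?_, .inl rfl⟩ huv he⟩ <;>
      simp [Prod.ext_iff, hrow, hcol]
  · intro h
    refine ⟨fun u v huv he => ?_, fun u v w huw hwv huv he => ?_⟩
    · obtain ⟨hrow, hcol, -⟩ := h u v huv.1 he
      exact huv.2.elim hrow hcol
    obtain ⟨hrow, hcol, hcorner⟩ := h u v huv he
    obtain ⟨-, -, hcorner'⟩ := h v u huv.symm he.symm
    rcases huw.2 with h₁ | h₁ <;> rcases hwv.2 with h₂ | h₂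
    · exact absurd (h₁.trans h₂) hrow
    · rwa [he, show w = (u.1, v.2) from Prod.ext h₁.symm h₂]
    · rwa [show w = (v.1, u.2) from Prod.ext h₂ h₁.symm]
    · exact absurd (h₁.trans h₂) hcol

theorem IsTwoRanking.comp_prodMap_id {f : α × β → ℕ}
    (hf : IsTwoRanking ((⊤ : SimpleGraph α) □ (⊤ : SimpleGraph β)) f) {e : γ → β}
    (he : Function.Injective e) :
    IsTwoRanking ((⊤ : SimpleGraph α) □ (⊤ : SimpleGraph γ)) (f ∘ Prod.map id e) := by
  rw [isTwoRanking_boxProd_top_iff] at hf ⊢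
  intro u v huv h
  obtain ⟨hrow, hcol, hcorner⟩ := hf _ _ ((Function.injective_id.prodMap he).ne huv) h
  exact ⟨hrow, he.ne_iff.mp hcol, hcorner⟩

end BoxProdTop

theorem Finset.sum_inv_card_fiber_eq_card_image {ι κ K : Type*} [Fintype ι] [DecidableEq κ]
    [DivisionSemiring K] [CharZero K] (f : ι → κ) :
    ∑ i, (#{j | f j = f i} : K)⁻¹ = #(univ.image f) := by
  rw [← sum_fiberwise_of_maps_to (t := univ.image f) fun i _ => mem_image_of_mem f (mem_univ i),
    card_eq_sum_ones, Nat.cast_sum]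
  refine sum_congr rfl fun r hr => ?_
  obtain ⟨i, -, rfl⟩ := mem_image.mp hr
  have hfiber : (#{j | f j = f i} : K) ≠ 0 :=
    Nat.cast_ne_zero.mpr (card_ne_zero_of_mem (a := i) (by simp))
  calc ∑ j with f j = f i, (#{j' | f j' = f j} : K)⁻¹
      = ∑ j with f j = f i, (#{j' | f j' = f i} : K)⁻¹ :=
        sum_congr rfl fun j hj => by rw [(mem_filter.mp hj).2]
    _ = _ := by rw [sum_const, nsmul_eq_mul, mul_inv_cancel₀ hfiber, Nat.cast_one]

theorem Function.Injective.sum_inv_card_lt_eq_harmonic {α β : Type*} [Fintype α]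
    [LinearOrder β] {g : α → β} (hg : Function.Injective g) :
    ∑ a, ((#{b | g a < g b} + 1 : ℕ) : ℚ)⁻¹ = harmonic (Fintype.card α) := by
  classical
  set rank : α → ℕ := fun a => #{b | g a < g b}
  have rank_strictAnti : ∀ a a', g a < g a' → rank a' < rank a := fun a a' h =>
    card_lt_card <| (ssubset_iff_of_subset fun b hb => by
      simp only [mem_filter, mem_univ, true_and] at hb ⊢
      exact h.trans hb).mpr ⟨a', by simpa using h, by simp⟩
  have rank_injective : Function.Injective rank := fun a a' h => by
    rcases lt_trichotomy (g a) (g a') with hlt | heq | hlt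
    · exact absurd h (rank_strictAnti a a' hlt).ne'
    · exact hg heq
    · exact absurd h (rank_strictAnti a' a hlt).ne
  have rank_lt : ∀ a, rank a < Fintype.card α := fun a =>
    card_lt_univ_of_notMem (x := a) (by simp)
  have image_rank : univ.image rank = range (Fintype.card α) :=
    eq_of_subset_of_card_le
      (fun k hk => by obtain ⟨a, -, rfl⟩ := mem_image.mp hk; simpa using rank_lt a)
      (by rw [card_range, card_image_of_injective _ rank_injective, card_univ])
  rw [harmonic, ← image_rank, sum_image fun a _ a' _ h => rank_injective h]

section LowerBound

variable {α β : Type*} [Fintype α] [Fintype β] [DecidableEq α] [DecidableEq β]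
  {f : α × β → ℕ}

theorem IsTwoRanking.card_fiber_le
    (hf : IsTwoRanking ((⊤ : SimpleGraph α) □ (⊤ : SimpleGraph β)) f) (v : α × β) :
    #{u | f u = f v} ≤ #{a | f v < f (a, v.2)} + 1 := by
  rw [isTwoRanking_boxProd_top_iff] at hf
  have hv : v ∈ ({u | f u = f v} : Finset _) := by simp
  rw [← card_erase_add_one hv, add_le_add_iff_right]
  refine card_le_card_of_injOn Prod.fst (fun u hu => ?_) fun u hu u' hu' h => ?_
  · rw [mem_coe, mem_erase, mem_filter] at hu
    simpa using (hf v u hu.1.symm hu.2.2.symm).2.2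
  · rw [mem_coe, mem_erase, mem_filter] at hu hu'
    by_contra hne
    exact (hf u u' hne (hu.2.2.trans hu'.2.2.symm)).1 h

theorem IsTwoRanking.card_mul_harmonic_le_card_image
    (hf : IsTwoRanking ((⊤ : SimpleGraph α) □ (⊤ : SimpleGraph β)) f) :
    (Fintype.card β : ℚ) * harmonic (Fintype.card α) ≤ #(univ.image f) := by
  have column_injective (b : β) : Function.Injective fun a => f (a, b) := fun a a' h => by
    by_contra hne
    exact (isTwoRanking_boxProd_top_iff.mp hf (a, b) (a', b) (by simpa using hne) h).2.1 rfl
  calc (Fintype.card β : ℚ) * harmonic (Fintype.card α)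
      = ∑ b, ∑ a, ((#{a' | f (a, b) < f (a', b)} + 1 : ℕ) : ℚ)⁻¹ := by
        simp only [(column_injective _).sum_inv_card_lt_eq_harmonic, sum_const, card_univ,
          nsmul_eq_mul]
    _ = ∑ v, ((#{a | f v < f (a, v.2)} + 1 : ℕ) : ℚ)⁻¹ := by
        rw [Fintype.sum_prod_type_right]
    _ ≤ ∑ v, (#{u | f u = f v} : ℚ)⁻¹ := sum_le_sum fun v _ =>
        inv_anti₀ (by simpa using card_pos.mpr ⟨v, by simp⟩)
          (by exact_mod_cast hf.card_fiber_le v)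
    _ = #(univ.image f) := sum_inv_card_fiber_eq_card_image f

end LowerBound

theorem Nat.eq_and_eq_of_mul_add_eq_mul_add {a b a' b' N : ℕ} (hb : b < N) (hb' : b' < N)
    (h : a * N + b = a' * N + b') : a = a' ∧ b = b' := by
  have hN : 0 < N := by omega
  obtain ⟨hq, hr⟩ := (Nat.div_mod_unique (a := a * N + b) (d := a) hN).mpr ⟨by ring, hb⟩
  obtain ⟨hq', hr'⟩ :=
    (Nat.div_mod_unique (a := a' * N + b') (d := a') hN).mpr ⟨by ring, hb'⟩
  rw [h] at hq hr
  exact ⟨hq.symm.trans hq', hr.symm.trans hr'⟩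

section UpperBound

variable {m : ℕ}

def succRanking (q N : ℕ) (r : Fin m × Fin q → ℕ) :
    Fin (m + 1) × (Fin (m + 1) × Fin q) → ℕ
  | (i, (p, c)) =>
    if h : i = p then c else q + p * N + r ((finSuccAboveEquiv p).symm ⟨i, h⟩, c)

variable {q N : ℕ}

theorem succRanking_lt {r : Fin m × Fin q → ℕ} (hr : ∀ v, r v < N) (v) :
    succRanking q N r v < q + (m + 1) * N := by
  obtain ⟨i, p, c⟩ := v
  dsimp only [succRanking]
  split_ifs with h
  · have := c.isLt; omega
  · have := hr ((finSuccAboveEquiv p).symm ⟨i, h⟩, c)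
    have : (p : ℕ) * N + N ≤ (m + 1) * N := by
      rw [← Nat.succ_mul]; exact Nat.mul_le_mul_right _ p.isLt
    omega

theorem isTwoRanking_succRanking {r : Fin m × Fin q → ℕ}
    (hr : IsTwoRanking ((⊤ : SimpleGraph (Fin m)) □ (⊤ : SimpleGraph (Fin q))) r)
    (hrN : ∀ v, r v < N) :
    IsTwoRanking ((⊤ : SimpleGraph (Fin (m + 1))) □ (⊤ : SimpleGraph (Fin (m + 1) × Fin q)))
      (succRanking q N r) := by
  rw [isTwoRanking_boxProd_top_iff] at hr ⊢
  rintro ⟨i, p, c⟩ ⟨i', p', c'⟩ huv he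
  dsimp only [succRanking] at he ⊢
  by_cases hi : i = p <;> by_cases hi' : i' = p'
  · subst hi hi'
    rw [dif_pos rfl, dif_pos rfl] at he
    have hp : i ≠ i' := fun h => huv (by rw [h, Fin.ext he])
    refine ⟨hp, fun h => hp (Prod.ext_iff.mp h).1, ?_⟩
    rw [dif_pos rfl, dif_neg hp.symm]
    have := c.isLt; omega
  · rw [dif_pos hi, dif_neg hi'] at he
    have := c.isLt; omega
  · rw [dif_neg hi, dif_pos hi'] at he
    have := c'.isLt; omega
  · rw [dif_neg hi, dif_neg hi'] at he
    set x := ((finSuccAboveEquiv p).symm ⟨i, hi⟩, c)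
    set x' := ((finSuccAboveEquiv p').symm ⟨i', hi'⟩, c')
    obtain ⟨hp, hre⟩ : (p : ℕ) = p' ∧ r x = r x' :=
      Nat.eq_and_eq_of_mul_add_eq_mul_add (hrN x) (hrN x') (by omega)
    obtain rfl := Fin.ext hp
    have hne : x ≠ x' := fun h => by
      obtain rfl : i = i' :=
        congrArg Subtype.val ((finSuccAboveEquiv p).symm.injective (congrArg Prod.fst h))
      obtain rfl : c = c' := congrArg Prod.snd h
      exact huv rfl
    obtain ⟨hrow, hcol, hcorner⟩ := hr x x' hne hre
    refine ⟨fun h => hrow (by subst h; rfl), fun h => hcol (Prod.ext_iff.mp h).2, ?_⟩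
    rw [dif_neg hi, dif_neg hi']
    exact Nat.add_lt_add_left hcorner _

end UpperBound

open Nat in
theorem exists_twoRanking_lt_factorial_mul_harmonic (m t : ℕ) :
    ∃ N : ℕ, (N : ℚ) = (m ! * t : ℕ) * harmonic m ∧
      ∃ f : Fin m × Fin (m ! * t) → ℕ,
        IsTwoRanking ((⊤ : SimpleGraph (Fin m)) □ (⊤ : SimpleGraph (Fin (m ! * t)))) f ∧
        ∀ v, f v < N := by
  induction m with
  | zero =>
    exact ⟨0, by simp, 0, ⟨fun u => u.1.elim0, fun u => u.1.elim0⟩, fun v => v.1.elim0⟩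
  | succ m ih =>
    obtain ⟨N, hN, r, hr, hrN⟩ := ih
    have hcard : (m + 1)! * t = (m + 1) * (m ! * t) := by rw [factorial_succ, mul_assoc]
    let e := (finCongr hcard).trans finProdFinEquiv.symm
    refine ⟨m ! * t + (m + 1) * N, ?_, succRanking _ N r ∘ Prod.map id e,
      (isTwoRanking_succRanking hr hrN).comp_prodMap_id e.injective,
      fun v => succRanking_lt hrN _⟩
    rw [hcard, harmonic_succ]
    push_cast at hN ⊢
    rw [hN]
    field_simp
    ring

theorem twoRankingNumber_eq_of_le_card_image {V : Type*} [Fintype V] {G : SimpleGraph V}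
    {N : ℕ} {f : V → ℕ} (hf : IsTwoRanking G f) (hfN : ∀ v, f v < N)
    (hN : ∀ g, IsTwoRanking G g → N ≤ #(univ.image g)) : twoRankingNumber G = N := by
  refine le_antisymm (Nat.sInf_le ⟨f, hf, hfN⟩) (le_csInf ⟨N, f, hf, hfN⟩ ?_)
  rintro N' ⟨g, hg, hgN'⟩
  calc N ≤ #(univ.image g) := hN g hg
    _ ≤ #(range N') := card_le_card fun r hr => by
        obtain ⟨v, -, rfl⟩ := mem_image.mp hr
        exact mem_range.mpr (hgN' v)
    _ = N' := card_range N'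

open SimpleGraph in
theorem twoRankingNumber_boxProd_complete_eq_harmonic_general (m n : ℕ)
    (hdvd : m.factorial ∣ n) :
    (twoRankingNumber ((⊤ : SimpleGraph (Fin m)) □ (⊤ : SimpleGraph (Fin n))) : ℝ) =
      (n : ℝ) * (∑ i ∈ Finset.range m, (1 : ℝ) / (i + 1)) := by
  obtain ⟨t, rfl⟩ := hdvd
  obtain ⟨N, hN, f, hf, hfN⟩ := exists_twoRanking_lt_factorial_mul_harmonic m t
  have hχ := twoRankingNumber_eq_of_le_card_image hf hfN fun g hg => by
    have := hg.card_mul_harmonic_le_card_image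
    rw [Fintype.card_fin, Fintype.card_fin, ← hN] at this
    exact_mod_cast this
  rw [hχ, ← Rat.cast_natCast, hN]
  push_cast [harmonic]
  simp [one_div]

open SimpleGraph in
/-- If `m!` divides `n`, then `χ₂(K_m □ K_n) = n · H_m`, where `H_m = 1 + 1/2 + ⋯ + 1/m`. -/
theorem twoRankingNumber_boxProd_complete_eq_harmonic (m n : ℕ) (hm : 0 < m) (hn : 0 < n)
    (hdvd : m.factorial ∣ n) :
    (twoRankingNumber ((⊤ : SimpleGraph (Fin m)) □ (⊤ : SimpleGraph (Fin n))) : ℝ) =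
      (n : ℝ) * (∑ i ∈ Finset.range m, (1 : ℝ) / (i + 1)) :=
  twoRankingNumber_boxProd_complete_eq_harmonic_general m n hdvd
end

section
/- If n is odd and n ≥ 25, then χ₂(C₃ □ C_n) = 6; if n is even and n ≥ 6, then χ₂(C₃ □ C_n) = 5. -/
open SimpleGraph Function

/-- The conditions on the paths of length 1 and 2 of the prism `K₃ □ K₂` that join its two
triangles, ranked by `a` and `b`. -/
def CrossRanked (a b : Fin 3 → ℕ) : Prop :=
  ∀ i i', a i = b i' → i ≠ i' ∧ a i < a i' ∧ a i < b i

def RowsRanked (a b c : Fin 3 → ℕ) : Prop :=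
  ∀ i, a i = c i → a i < b i

def RankedColumns (a b c : Fin 3 → ℕ) : Prop :=
  Injective a ∧ CrossRanked a b ∧ RowsRanked a b c

instance (a b : Fin 3 → ℕ) : Decidable (CrossRanked a b) :=
  inferInstanceAs (Decidable (∀ _ _, _))

instance (a b c : Fin 3 → ℕ) : Decidable (RowsRanked a b c) :=
  inferInstanceAs (Decidable (∀ _, _))

instance (a b c : Fin 3 → ℕ) : Decidable (RankedColumns a b c) :=
  inferInstanceAs (Decidable (_ ∧ _ ∧ _))

lemma CrossRanked.symm {a b : Fin 3 → ℕ} (h : CrossRanked a b) : CrossRanked b a := by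
  intro i i' hab
  obtain ⟨hne, h₁, h₂⟩ := h i' i hab.symm
  exact ⟨hne.symm, hab ▸ h₂, hab ▸ h₁⟩

lemma RowsRanked.symm {a b c : Fin 3 → ℕ} (h : RowsRanked a b c) : RowsRanked c b a :=
  fun i hca => hca ▸ h i hca.symm

section boxProd

variable {W : Type*} {H : SimpleGraph W} {f : Fin 3 × W → ℕ}

theorem isTwoRanking_boxProd_iff :
    IsTwoRanking (cycleGraph 3 □ H) f ↔
      (∀ j, Injective (f ⟨·, j⟩)) ∧
      (∀ j j', H.Adj j j' → CrossRanked (f ⟨·, j⟩) (f ⟨·, j'⟩)) ∧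
      (∀ j j' j'', H.Adj j j' → H.Adj j' j'' → j ≠ j'' →
        RowsRanked (f ⟨·, j⟩) (f ⟨·, j'⟩) (f ⟨·, j''⟩)) := by
  simp only [IsTwoRanking, boxProd_adj, cycleGraph_three_eq_top, top_adj]
  constructor
  · rintro ⟨hedge, hpath⟩
    refine ⟨fun j i i' h => ?_, fun j j' hj i i' h => ?_, fun j j' j'' hj hj' hne i h => ?_⟩
    · by_contra hii
      exact hedge (i, j) (i', j) (.inl ⟨hii, rfl⟩) h
    · have hii : i ≠ i' := by
        rintro rfl
        exact hedge (i, j) (i, j') (.inr ⟨hj, rfl⟩) h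
      refine ⟨hii, ?_, ?_⟩
      · exact hpath (i, j) (i', j') (i', j) (.inl ⟨hii, rfl⟩) (.inr ⟨hj, rfl⟩) (by simp [hii]) h
      · exact hpath (i, j) (i', j') (i, j') (.inr ⟨hj, rfl⟩) (.inl ⟨hii, rfl⟩) (by simp [hii]) h
    · exact hpath (i, j) (i, j'') (i, j') (.inr ⟨hj, rfl⟩) (.inr ⟨hj', rfl⟩) (by simp [hne]) h
  · rintro ⟨hcol, hcross, hrow⟩
    refine ⟨?_, ?_⟩
    · rintro ⟨i, j⟩ ⟨i', j'⟩ (⟨hii, rfl⟩ | ⟨hj, rfl⟩) h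
      · exact hii ((hcol j) h)
      · exact (hcross j j' hj i i h).1 rfl
    · rintro ⟨i, j⟩ ⟨i'', j''⟩ ⟨i', j'⟩ (⟨hii, rfl⟩ | ⟨hj, rfl⟩) (⟨hii', rfl⟩ | ⟨hj', rfl⟩) hne h
      · exact absurd (hcol j h) (by simpa using hne)
      · exact (hcross j j'' hj' i i' h).2.1
      · exact (hcross j j' hj i i'' h).2.2
      · exact hrow j j' j'' hj hj' (by rintro rfl; simp at hne) i h

set_option maxRecDepth 10000 in
theorem not_crossRanked_of_lt_four {a b : Fin 3 → ℕ} (ha : Injective a) (hb : Injective b)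
    (ha₄ : ∀ i, a i < 4) (hb₄ : ∀ i, b i < 4) : ¬ CrossRanked a b := by
  have key : ∀ x : Fin 3 → Fin 4, Injective x → ∀ y : Fin 3 → Fin 4, Injective y →
      ¬ CrossRanked (fun i => x i) (fun i => y i) := by
    decide
  exact key (fun i => ⟨a i, ha₄ i⟩) (fun i i' h => ha (Fin.val_eq_of_eq h))
    (fun i => ⟨b i, hb₄ i⟩) (fun i i' h => hb (Fin.val_eq_of_eq h))

theorem CrossRanked.exists_eq_four_iff {a b : Fin 3 → ℕ} (h : CrossRanked a b)
    (ha : Injective a) (hb : Injective b) (ha₅ : ∀ i, a i < 5) (hb₅ : ∀ i, b i < 5) :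
    (∃ i, a i = 4) ↔ ¬ ∃ i, b i = 4 := by
  constructor
  · rintro ⟨i, hi⟩ ⟨i', hi'⟩
    have := (h i i' (hi.trans hi'.symm)).2.1
    have := ha₅ i'
    omega
  · intro hb₄
    by_contra ha₄
    push Not at ha₄ hb₄
    refine not_crossRanked_of_lt_four ha hb (fun i => ?_) (fun i => ?_) h
    · have := ha₅ i; have := ha₄ i; omega
    · have := hb₅ i; have := hb₄ i; omega

theorem IsTwoRanking.five_le_of_adj {k : ℕ} (hf : IsTwoRanking (cycleGraph 3 □ H) f)
    (hk : ∀ v, f v < k) {j j' : W} (hj : H.Adj j j') : 5 ≤ k := by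
  obtain ⟨hcol, hcross, -⟩ := isTwoRanking_boxProd_iff.mp hf
  by_contra! hk₄
  exact not_crossRanked_of_lt_four (hcol j) (hcol j') (fun i => by have := hk (i, j); omega)
    (fun i => by have := hk (i, j'); omega) (hcross j j' hj)

theorem IsTwoRanking.colorable_two (hf : IsTwoRanking (cycleGraph 3 □ H) f)
    (hf₅ : ∀ v, f v < 5) : H.Colorable 2 := by
  obtain ⟨hcol, hcross, -⟩ := isTwoRanking_boxProd_iff.mp hf
  refine ⟨Coloring.mk (fun j => if ∃ i, f (i, j) = 4 then 0 else 1) fun {j j'} hj => ?_⟩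
  have := (hcross j j' hj).exists_eq_four_iff (hcol j) (hcol j') (fun _ => hf₅ _) (fun _ => hf₅ _)
  split_ifs <;> simp_all

end boxProd

theorem IsTwoRanking.six_le_of_odd {n k : ℕ} {f : Fin 3 × Fin n → ℕ}
    (hf : IsTwoRanking (cycleGraph 3 □ cycleGraph n) f) (hk : ∀ v, f v < k) (hn : Odd n)
    (hn₂ : 2 ≤ n) : 6 ≤ k := by
  by_contra! hk₅
  have h₂ := (hf.colorable_two fun v => by have := hk v; omega).chromaticNumber_le
  rw [chromaticNumber_cycleGraph_of_odd n hn₂ hn] at h₂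
  norm_num at h₂

lemma cycleGraph_adj_iff {n : ℕ} {u v : Fin (n + 2)} :
    (cycleGraph (n + 2)).Adj u v ↔ u = v + 1 ∨ v = u + 1 := by
  rw [cycleGraph_adj, sub_eq_iff_eq_add', sub_eq_iff_eq_add']

lemma apply_val_add_one {α : Type*} {n : ℕ} [NeZero n] {s : ℕ → α} (hs : s n = s 0)
    (j : Fin n) : s (j + 1 : Fin n) = s (j + 1) := by
  rw [Fin.val_add, Fin.val_one', Nat.add_mod_mod]
  rcases Nat.lt_or_eq_of_le j.isLt with h | h
  · rw [Nat.mod_eq_of_lt h]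
  · rw [show (j : ℕ) + 1 = n from h, Nat.mod_self, hs]

theorem isTwoRanking_of_seq {n : ℕ} (hn : 3 ≤ n) {s : ℕ → Fin 3 → ℕ}
    (hs : ∀ m, RankedColumns (s m) (s (m + 1)) (s (m + 2))) (h₀ : s n = s 0)
    (h₁ : s (n + 1) = s 1) :
    IsTwoRanking (cycleGraph 3 □ cycleGraph n) (fun v => s v.2 v.1) := by
  obtain ⟨n, rfl⟩ : ∃ k, n = k + 3 := ⟨n - 3, by omega⟩
  have hsucc (j : Fin (n + 3)) : s (j + 1 : Fin _) = s (j + 1) := apply_val_add_one h₀ j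
  have hsucc₂ (j : Fin (n + 3)) : s (j + 1 + 1 : Fin _) = s (j + 2) :=
    (hsucc (j + 1)).trans (apply_val_add_one (s := fun m => s (m + 1)) h₁ j)
  refine isTwoRanking_boxProd_iff.mpr
    ⟨fun j => (hs j).1, fun j j' hj => ?_, fun j j' j'' hj hj' hne => ?_⟩
  · rcases cycleGraph_adj_iff.mp hj with rfl | rfl
    · dsimp only
      rw [hsucc]
      exact (hs j').2.1.symm
    · dsimp only
      rw [hsucc]
      exact (hs j).2.1
  · dsimp only
    rcases cycleGraph_adj_iff.mp hj with rfl | rfl <;>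
      rcases cycleGraph_adj_iff.mp hj' with h | rfl
    · subst h
      rw [hsucc₂, hsucc]
      exact (hs j'').2.2.symm
    · exact absurd rfl hne
    · exact absurd (add_right_cancel h) hne
    · rw [hsucc₂, hsucc]
      exact (hs j).2.2

def blockSeq (p q : List (Fin 3 → ℕ)) (m : ℕ) : Fin 3 → ℕ :=
  if m < p.length then p.getD m 0 else q.getD ((m - p.length) % q.length) 0

section blockSeq

variable {p q : List (Fin 3 → ℕ)}

lemma blockSeq_add_of_le {m : ℕ} (hm : p.length ≤ m) (j : ℕ) :
    blockSeq p q (m + j) = blockSeq p q (p.length + (m - p.length) % q.length + j) := by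
  unfold blockSeq
  rw [if_neg (by omega), if_neg (by omega), Nat.add_assoc, Nat.add_sub_cancel_left,
    Nat.mod_add_mod, Nat.sub_add_comm hm]

lemma exists_blockSeq_add_eq (hq : q ≠ []) (m : ℕ) :
    ∃ m' < p.length + q.length, ∀ j, blockSeq p q (m + j) = blockSeq p q (m' + j) := by
  by_cases hm : m < p.length + q.length
  · exact ⟨m, hm, fun _ => rfl⟩
  · have := Nat.mod_lt (m - p.length) (List.length_pos_iff.mpr hq)
    exact ⟨_, by omega, blockSeq_add_of_le (by omega)⟩

end blockSeq

theorem exists_isTwoRanking_blockSeq (p q : List (Fin 3 → ℕ)) (hq : q ≠ []) {n r : ℕ}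
    (hn : 3 ≤ n) (hpn : p.length ≤ n) (hmod : n % q.length = p.length % q.length)
    (hranked : ∀ m < p.length + q.length,
      RankedColumns (blockSeq p q m) (blockSeq p q (m + 1)) (blockSeq p q (m + 2)))
    (hclosed : blockSeq p q p.length = blockSeq p q 0 ∧
      blockSeq p q (p.length + 1) = blockSeq p q 1)
    (hr : ∀ m < p.length + q.length, ∀ i, blockSeq p q m i < r) :
    ∃ f, IsTwoRanking (cycleGraph 3 □ cycleGraph n) f ∧ ∀ v, f v < r := by
  have hn₀ : (n - p.length) % q.length = 0 := Nat.sub_mod_eq_zero_of_mod_eq hmod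
  refine ⟨fun v => blockSeq p q v.2 v.1, isTwoRanking_of_seq hn (fun m => ?_) ?_ ?_, ?_⟩
  · obtain ⟨m', hm', h⟩ := exists_blockSeq_add_eq hq m
    have h₀ : blockSeq p q m = blockSeq p q m' := by simpa using h 0
    rw [h₀, h 1, h 2]
    exact hranked m' hm'
  · have h := blockSeq_add_of_le (q := q) hpn 0
    rw [hn₀, add_zero, add_zero, add_zero] at h
    exact h.trans hclosed.1
  · have h := blockSeq_add_of_le (q := q) hpn 1
    rw [hn₀, add_zero] at h
    exact h.trans hclosed.2
  · rintro ⟨i, j⟩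
    obtain ⟨m', hm', h⟩ := exists_blockSeq_add_eq hq j
    have h₀ : blockSeq p q j = blockSeq p q m' := by simpa using h 0
    simpa only [h₀] using hr m' hm' i

def block₄ : List (Fin 3 → ℕ) := [![0, 1, 2], ![3, 0, 4], ![0, 2, 1], ![4, 0, 3]]

def block₅ : List (Fin 3 → ℕ) := [![0, 1, 2], ![3, 0, 4], ![0, 2, 5], ![1, 0, 3], ![4, 5, 0]]

def block₆ : List (Fin 3 → ℕ) :=
  [![0, 1, 2], ![3, 0, 4], ![1, 2, 0], ![0, 4, 3], ![2, 0, 1], ![4, 3, 0]]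

def block₇ : List (Fin 3 → ℕ) :=
  [![0, 1, 2], ![3, 0, 4], ![0, 2, 1], ![4, 0, 3], ![0, 1, 2], ![3, 4, 0], ![5, 3, 1]]

theorem exists_isTwoRanking_lt_five_of_even {n : ℕ} (hn : Even n) (h₄ : 4 ≤ n) :
    ∃ f, IsTwoRanking (cycleGraph 3 □ cycleGraph n) f ∧ ∀ v, f v < 5 := by
  obtain h | h : n % 4 = 0 ∨ n % 4 = 2 := by rcases hn with ⟨k, rfl⟩; omega
  · exact exists_isTwoRanking_blockSeq [] block₄ (by simp [block₄]) (by omega) (by simp)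
      (by simpa [block₄]) (by decide) (by decide) (by decide)
  · exact exists_isTwoRanking_blockSeq block₆ block₄ (by simp [block₄]) (by omega)
      (by simp [block₆]; omega) (by simpa [block₄, block₆]) (by decide) (by decide) (by decide)

theorem exists_isTwoRanking_lt_six_of_odd {n : ℕ} (hn : Odd n) (h₅ : 5 ≤ n) :
    ∃ f, IsTwoRanking (cycleGraph 3 □ cycleGraph n) f ∧ ∀ v, f v < 6 := by
  obtain h | h : n % 4 = 1 ∨ n % 4 = 3 := by rcases hn with ⟨k, rfl⟩; omega
  · exact exists_isTwoRanking_blockSeq block₅ block₄ (by simp [block₄]) (by omega)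
      (by simp [block₅]; omega) (by simpa [block₄, block₅]) (by decide) (by decide) (by decide)
  · exact exists_isTwoRanking_blockSeq block₇ block₄ (by simp [block₄]) (by omega)
      (by simp [block₇]; omega) (by simpa [block₄, block₇]) (by decide) (by decide) (by decide)

open SimpleGraph in
/-- If `n` is odd and `n ≥ 25` then `χ₂(C₃ □ C_n) = 6`; if `n` is even and `n ≥ 6` then
`χ₂(C₃ □ C_n) = 5`. -/
theorem twoRankingNumber_triangle_cycle (n : ℕ) :
    (Odd n → 25 ≤ n → twoRankingNumber (cycleGraph 3 □ cycleGraph n) = 6) ∧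
    (Even n → 6 ≤ n → twoRankingNumber (cycleGraph 3 □ cycleGraph n) = 5) := by
  refine ⟨fun hodd hn => ?_, fun heven hn => ?_⟩
  · obtain ⟨f, hf, hf₆⟩ := exists_isTwoRanking_lt_six_of_odd hodd (by omega)
    exact IsLeast.csInf_eq
      ⟨⟨f, hf, hf₆⟩, fun k ⟨g, hg, hgk⟩ => hg.six_le_of_odd hgk hodd (by omega)⟩
  · obtain ⟨f, hf, hf₅⟩ := exists_isTwoRanking_lt_five_of_even heven (by omega)
    have hadj : (cycleGraph n).Adj ⟨0, by omega⟩ ⟨1, by omega⟩ := by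
      simp [cycleGraph_adj', Fin.sub_val_of_le]
    exact IsLeast.csInf_eq ⟨⟨f, hf, hf₅⟩, fun k ⟨g, hg, hgk⟩ => hg.five_le_of_adj hgk hadj⟩
end
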